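/- arXiv:1802.03703 — 10 statements merged into one kernel-verified Lean document; each statement's English description precedes it below -/
import Mathlib

section
/- Let s_1, …, s_m ∈ ℝⁿ be nonzero vectors with probabilities p_1, …, p_m > 0 summing to 1, and assume H := Σ_j p_j s_j s_jᵀ/(s_jᵀ A s_j) is invertible. Let W := A^{1/2} H A^{1/2} and let 0 < ω < 2. For any x_0 ∈ ℝⁿ and any t ≥ 0, define for each index sequence ω = (ω_1, …, ω_t) ∈ {1,…,m}^t the iterates x_{j}(ω) by x_0(ω) = x_0 and x_{j+1}(ω) = x_j(ω) − ω·(s_{ω_{j+1}}ᵀ(A x_j(ω) − b)/(s_{ω_{j+1}}ᵀ A s_{ω_{j+1}})) s_{ω_{j+1}}. Then Σ_{ω ∈ {1,…,m}^t} (∏_{j=1}^t p_{ω_j}) ‖x_t(ω) − x*‖_A² ≤ (1 − ω(2−ω)λ_min(W))^t ‖x_0 − x*‖_A², where λ_min(W) is the smallest eigenvalue of W. -/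
open Matrix BigOperators Finset

/-- One step of stochastic descent with direction `s` and stepsize `ω`. -/
noncomputable def sdStep {n : ℕ} (A : Matrix (Fin n) (Fin n) ℝ) (b : Fin n → ℝ)
    (ω : ℝ) (s x : Fin n → ℝ) : Fin n → ℝ :=
  x - (ω * (s ⬝ᵥ (A *ᵥ x - b)) / (s ⬝ᵥ A *ᵥ s)) • s

/-- The positive semidefinite square root of a positive semidefinite matrix
(the definition of `Matrix.PosSemidef.sqrt` in the older Mathlib, since removed). -/
noncomputable def Matrix.PosSemidef.sqrt {n 𝕜 : Type*} [Fintype n] [DecidableEq n] [RCLike 𝕜]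
    [PartialOrder 𝕜]
    {A : Matrix n n 𝕜} (hA : A.PosSemidef) : Matrix n n 𝕜 :=
  hA.1.eigenvectorUnitary.1 * diagonal ((↑) ∘ (√·) ∘ hA.1.eigenvalues) *
    (star hA.1.eigenvectorUnitary : Matrix n n 𝕜)

/-- The iterate `x_t(σ)` of stochastic descent after applying the directions
`s (σ 0), s (σ 1), …` in order, starting from `x0`. -/
noncomputable def sdIter {n m t : ℕ} (A : Matrix (Fin n) (Fin n) ℝ) (b : Fin n → ℝ)
    (ω : ℝ) (s : Fin m → Fin n → ℝ) (x0 : Fin n → ℝ) (σ : Fin t → Fin m) : Fin n → ℝ :=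
  (List.ofFn σ).foldl (fun x i => sdStep A b ω (s i) x) x0

lemma Matrix.PosSemidef.sqrt_mul_self {n : ℕ} {A : Matrix (Fin n) (Fin n) ℝ}
    (hA : A.PosSemidef) : hA.sqrt * hA.sqrt = A := by
  unfold Matrix.PosSemidef.sqrt
  have hU : star (hA.1.eigenvectorUnitary : Matrix (Fin n) (Fin n) ℝ) *
      (hA.1.eigenvectorUnitary : Matrix (Fin n) (Fin n) ℝ) = 1 :=
    (Matrix.mem_unitaryGroup_iff').mp hA.1.eigenvectorUnitary.2
  have hD : diagonal (RCLike.ofReal ∘ (√·) ∘ hA.1.eigenvalues : Fin n → ℝ) *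
      diagonal (RCLike.ofReal ∘ (√·) ∘ hA.1.eigenvalues : Fin n → ℝ) =
      diagonal (RCLike.ofReal ∘ hA.1.eigenvalues : Fin n → ℝ) := by
    rw [diagonal_mul_diagonal]
    congr 1
    funext i
    simp [Real.mul_self_sqrt (hA.eigenvalues_nonneg i)]
  conv_rhs => rw [hA.1.spectral_theorem, Unitary.conjStarAlgAut_apply]
  rw [← hD]
  simp only [Matrix.mul_assoc]
  rw [← Matrix.mul_assoc (star _) _ (diagonal _ * star _), hU, Matrix.one_mul]

lemma Matrix.PosSemidef.posSemidef_sqrt {n : ℕ} {A : Matrix (Fin n) (Fin n) ℝ}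
    (hA : A.PosSemidef) : hA.sqrt.PosSemidef := by
  unfold Matrix.PosSemidef.sqrt
  exact (posSemidef_diagonal_iff.mpr fun i => by simp [Real.sqrt_nonneg]).mul_mul_conjTranspose_same _

namespace SDaux
variable {n : ℕ}

lemma symm_dot {M : Matrix (Fin n) (Fin n) ℝ} (hM : M.IsHermitian) (u v : Fin n → ℝ) :
    (M *ᵥ u) ⬝ᵥ v = u ⬝ᵥ (M *ᵥ v) := by
  have hMt : Mᵀ = M := by
    rw [← conjTranspose_eq_transpose_of_trivial]; exact hM
  rw [dotProduct_mulVec, ← mulVec_transpose, hMt]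

lemma vecMulVec_mulVec (w v u : Fin n → ℝ) :
    vecMulVec w v *ᵥ u = (v ⬝ᵥ u) • w := by
  funext i
  simp [mulVec, dotProduct, vecMulVec_apply, Finset.mul_sum, mul_comm, mul_left_comm]

lemma dot_sum {ι : Type*} (s : Finset ι) (v : Fin n → ℝ) (f : ι → Fin n → ℝ) :
    v ⬝ᵥ (∑ j ∈ s, f j) = ∑ j ∈ s, v ⬝ᵥ f j := by
  induction s using Finset.cons_induction with
  | empty => simp
  | cons a s ha ih => simp [Finset.sum_cons, dotProduct_add, ih]

lemma sum_mulVec {ι : Type*} (s : Finset ι) (M : ι → Matrix (Fin n) (Fin n) ℝ)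
    (v : Fin n → ℝ) : (∑ j ∈ s, M j) *ᵥ v = ∑ j ∈ s, M j *ᵥ v := by
  induction s using Finset.cons_induction with
  | empty => simp
  | cons a s ha ih => simp [Finset.sum_cons, Matrix.add_mulVec, ih]

lemma rayleigh_lower {W : Matrix (Fin n) (Fin n) ℝ} (hW : W.IsHermitian) (y : Fin n → ℝ) :
    (⨅ i, hW.eigenvalues i) * (y ⬝ᵥ y) ≤ y ⬝ᵥ W *ᵥ y := by
  set μ := ⨅ i, hW.eigenvalues i with hμdef
  have hμ : ∀ i, μ ≤ hW.eigenvalues i := fun i =>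
    ciInf_le (Set.Finite.bddBelow (Set.finite_range _)) i
  have key : W - μ • (1 : Matrix (Fin n) (Fin n) ℝ) =
      (hW.eigenvectorUnitary : Matrix (Fin n) (Fin n) ℝ) *
        diagonal (fun i => hW.eigenvalues i - μ) *
        star (hW.eigenvectorUnitary : Matrix (Fin n) (Fin n) ℝ) := by
    have hU : (hW.eigenvectorUnitary : Matrix (Fin n) (Fin n) ℝ) *
        star (hW.eigenvectorUnitary : Matrix (Fin n) (Fin n) ℝ) = 1 :=
      (Matrix.mem_unitaryGroup_iff).mp hW.eigenvectorUnitary.2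
    have hd : diagonal (fun i => hW.eigenvalues i - μ) =
        diagonal (RCLike.ofReal ∘ hW.eigenvalues) - μ • (1 : Matrix (Fin n) (Fin n) ℝ) := by
      rw [smul_one_eq_diagonal, ← diagonal_sub]
      rfl
    rw [hd, Matrix.mul_sub, Matrix.sub_mul,
      ← show W = _ from hW.spectral_theorem.trans (Unitary.conjStarAlgAut_apply _ _)]
    congr 1
    rw [Matrix.mul_smul, Matrix.mul_one, Matrix.smul_mul, hU]
  have hpsd : (W - μ • (1 : Matrix (Fin n) (Fin n) ℝ)).PosSemidef := by
    rw [key]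
    exact (posSemidef_diagonal_iff.mpr fun i => sub_nonneg.2 (hμ i)).mul_mul_conjTranspose_same _
  have h2 := hpsd.dotProduct_mulVec_nonneg y
  rw [star_trivial, sub_mulVec, smul_mulVec, one_mulVec, dotProduct_sub,
    dotProduct_smul, smul_eq_mul] at h2
  linarith

lemma hb {A : Matrix (Fin n) (Fin n) ℝ} (hA : A.PosDef) (b : Fin n → ℝ) :
    A *ᵥ (A⁻¹ *ᵥ b) = b := by
  rw [mulVec_mulVec, Matrix.mul_nonsing_inv _ (isUnit_iff_ne_zero.mpr hA.det_pos.ne'),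
    one_mulVec]

lemma sdStep_err {A : Matrix (Fin n) (Fin n) ℝ} (hA : A.PosDef) (b : Fin n → ℝ)
    (ω : ℝ) (s x : Fin n → ℝ) (hs : s ≠ 0) :
    (sdStep A b ω s x - A⁻¹ *ᵥ b) ⬝ᵥ A *ᵥ (sdStep A b ω s x - A⁻¹ *ᵥ b)
      = (x - A⁻¹ *ᵥ b) ⬝ᵥ A *ᵥ (x - A⁻¹ *ᵥ b)
        - ω * (2 - ω) * (s ⬝ᵥ A *ᵥ (x - A⁻¹ *ᵥ b)) ^ 2 / (s ⬝ᵥ A *ᵥ s) := by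
  set e := x - A⁻¹ *ᵥ b with he
  have hAxb : A *ᵥ x - b = A *ᵥ e := by rw [he, mulVec_sub, hb hA b]
  have hq : 0 < s ⬝ᵥ A *ᵥ s := by simpa using hA.dotProduct_mulVec_pos hs
  set q := s ⬝ᵥ A *ᵥ s with hqdef
  set r := s ⬝ᵥ A *ᵥ e with hrdef
  have hstep : sdStep A b ω s x - A⁻¹ *ᵥ b = e - (ω * r / q) • s := by
    unfold sdStep
    rw [hAxb, ← hrdef, ← hqdef, sub_right_comm, ← he]
  rw [hstep]
  simp only [mulVec_sub, mulVec_smul, sub_dotProduct, dotProduct_sub, smul_dotProduct,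
    dotProduct_smul, smul_eq_mul]
  have hes : e ⬝ᵥ A *ᵥ s = r := by
    rw [← symm_dot hA.1 e s, dotProduct_comm]
  rw [hes, ← hrdef, ← hqdef]
  field_simp
  ring

lemma step_exp {m : ℕ} {A : Matrix (Fin n) (Fin n) ℝ} (hA : A.PosDef) (b : Fin n → ℝ)
    {s : Fin m → Fin n → ℝ} (hs : ∀ j, s j ≠ 0)
    {p : Fin m → ℝ} (hpsum : ∑ j, p j = 1)
    {H W : Matrix (Fin n) (Fin n) ℝ}
    (hH : H = ∑ j, (p j / (s j ⬝ᵥ A *ᵥ s j)) • vecMulVec (s j) (s j))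
    (hWdef : W = hA.posSemidef.sqrt * H * hA.posSemidef.sqrt)
    (hW : W.IsHermitian)
    {ω : ℝ} (hω0 : 0 < ω) (hω2 : ω < 2) (x : Fin n → ℝ) :
    ∑ j, p j * ((sdStep A b ω (s j) x - A⁻¹ *ᵥ b) ⬝ᵥ A *ᵥ (sdStep A b ω (s j) x - A⁻¹ *ᵥ b))
      ≤ (1 - ω * (2 - ω) * ⨅ i, hW.eigenvalues i) *
          ((x - A⁻¹ *ᵥ b) ⬝ᵥ A *ᵥ (x - A⁻¹ *ᵥ b)) := by
  set e := x - A⁻¹ *ᵥ b with he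
  set v := A *ᵥ e with hv
  set E := e ⬝ᵥ v with hE
  set μ := ⨅ i, hW.eigenvalues i with hμ
  have hQ : v ⬝ᵥ H *ᵥ v = ∑ j, p j * ((s j ⬝ᵥ v) ^ 2 / (s j ⬝ᵥ A *ᵥ s j)) := by
    rw [hH, sum_mulVec, dot_sum]
    refine Finset.sum_congr rfl fun j _ => ?_
    rw [smul_mulVec, vecMulVec_mulVec, dotProduct_smul, smul_eq_mul, dotProduct_smul,
      smul_eq_mul, dotProduct_comm v (s j)]
    ring
  have hlow : μ * E ≤ v ⬝ᵥ H *ᵥ v := by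
    set S := hA.posSemidef.sqrt with hS
    have hSS : S * S = A := hA.posSemidef.sqrt_mul_self
    have hSh : S.IsHermitian := hA.posSemidef.posSemidef_sqrt.1
    set y := S *ᵥ e with hy
    have hvy : v = S *ᵥ y := by rw [hy, mulVec_mulVec, hSS]
    have h1 : v ⬝ᵥ H *ᵥ v = y ⬝ᵥ W *ᵥ y := by
      rw [hvy, hWdef, ← mulVec_mulVec, ← mulVec_mulVec, ← symm_dot hSh y]
    have h2 : E = y ⬝ᵥ y := by
      rw [hE, hvy, ← symm_dot hSh e y]
    rw [h1, h2]
    exact rayleigh_lower hW y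
  have hfac : 0 < ω * (2 - ω) := by nlinarith
  have hterm : ∀ j : Fin m, p j *
        ((sdStep A b ω (s j) x - A⁻¹ *ᵥ b) ⬝ᵥ A *ᵥ (sdStep A b ω (s j) x - A⁻¹ *ᵥ b))
      = p j * E - ω * (2 - ω) * (p j * ((s j ⬝ᵥ v) ^ 2 / (s j ⬝ᵥ A *ᵥ s j))) := by
    intro j
    rw [sdStep_err hA b ω (s j) x (hs j), ← he, ← hv, ← hE]
    ring
  have hsum : ∑ j, p j *
        ((sdStep A b ω (s j) x - A⁻¹ *ᵥ b) ⬝ᵥ A *ᵥ (sdStep A b ω (s j) x - A⁻¹ *ᵥ b))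
      = E - ω * (2 - ω) * (v ⬝ᵥ H *ᵥ v) := by
    rw [Finset.sum_congr rfl fun j _ => hterm j, Finset.sum_sub_distrib, ← Finset.sum_mul,
      hpsum, one_mul, ← Finset.mul_sum, ← hQ]
  rw [hsum]
  nlinarith [mul_le_mul_of_nonneg_left hlow hfac.le, hlow]

-- extra

lemma sdIter_cons {m t : ℕ} (A : Matrix (Fin n) (Fin n) ℝ) (b : Fin n → ℝ)
    (ω : ℝ) (s : Fin m → Fin n → ℝ) (x0 : Fin n → ℝ) (j : Fin m) (σ : Fin t → Fin m) :
    sdIter A b ω s x0 (Fin.cons j σ) = sdIter A b ω s (sdStep A b ω (s j) x0) σ := by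
  unfold sdIter
  rw [List.ofFn_succ]
  simp only [Fin.cons_zero, Fin.cons_succ, List.foldl_cons]

end SDaux

theorem stmt0 {n m : ℕ} (A : Matrix (Fin n) (Fin n) ℝ) (hA : A.PosDef)
    (b : Fin n → ℝ) (s : Fin m → Fin n → ℝ) (hs : ∀ j, s j ≠ 0)
    (p : Fin m → ℝ) (hp : ∀ j, 0 < p j) (hpsum : ∑ j, p j = 1)
    (H : Matrix (Fin n) (Fin n) ℝ)
    (hH : H = ∑ j, (p j / (s j ⬝ᵥ A *ᵥ s j)) • vecMulVec (s j) (s j))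
    (hHinv : IsUnit H)
    (W : Matrix (Fin n) (Fin n) ℝ)
    (hWdef : W = hA.posSemidef.sqrt * H * hA.posSemidef.sqrt)
    (hW : W.IsHermitian)
    (ω : ℝ) (hω0 : 0 < ω) (hω2 : ω < 2)
    (x0 : Fin n → ℝ) (t : ℕ) :
    ∑ σ : Fin t → Fin m, (∏ j, p (σ j)) *
        ((sdIter A b ω s x0 σ - A⁻¹ *ᵥ b) ⬝ᵥ A *ᵥ (sdIter A b ω s x0 σ - A⁻¹ *ᵥ b)) ≤
      (1 - ω * (2 - ω) * ⨅ i, hW.eigenvalues i) ^ t *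
        ((x0 - A⁻¹ *ᵥ b) ⬝ᵥ A *ᵥ (x0 - A⁻¹ *ᵥ b)) := by
  classical
  rcases Nat.eq_zero_or_pos m with hm | hm
  · subst hm; simp at hpsum
  have hj0 : Nonempty (Fin m) := ⟨⟨0, hm⟩⟩
  rcases Nat.eq_zero_or_pos n with hn | hn
  · exfalso
    apply hs hj0.some
    subst hn
    exact funext fun i => i.elim0
  set μ := ⨅ i, hW.eigenvalues i with hμ
  set c := 1 - ω * (2 - ω) * μ with hc'
  have hstep : ∀ x : Fin n → ℝ,
      ∑ j, p j * ((sdStep A b ω (s j) x - A⁻¹ *ᵥ b) ⬝ᵥ A *ᵥ (sdStep A b ω (s j) x - A⁻¹ *ᵥ b))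
        ≤ c * ((x - A⁻¹ *ᵥ b) ⬝ᵥ A *ᵥ (x - A⁻¹ *ᵥ b)) :=
    fun x => SDaux.step_exp hA b hs hpsum hH hWdef hW hω0 hω2 x
  have hnn : ∀ y : Fin n → ℝ, 0 ≤ y ⬝ᵥ A *ᵥ y := by
    intro y; simpa using hA.posSemidef.dotProduct_mulVec_nonneg y
  have hc : 0 ≤ c := by
    set y0 : Fin n → ℝ := Pi.single (⟨0, hn⟩ : Fin n) (1 : ℝ) with hy0def
    have hy0 : y0 ≠ 0 := by
      intro h
      have := congrFun h ⟨0, hn⟩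
      simp [hy0def] at this
    have hE0 : 0 < y0 ⬝ᵥ A *ᵥ y0 := by simpa using hA.dotProduct_mulVec_pos hy0
    have h1 := hstep (A⁻¹ *ᵥ b + y0)
    rw [add_sub_cancel_left] at h1
    have h3 : (0:ℝ) ≤ ∑ j, p j *
        ((sdStep A b ω (s j) (A⁻¹ *ᵥ b + y0) - A⁻¹ *ᵥ b) ⬝ᵥ
          A *ᵥ (sdStep A b ω (s j) (A⁻¹ *ᵥ b + y0) - A⁻¹ *ᵥ b)) :=
      Finset.sum_nonneg fun j _ => mul_nonneg (hp j).le (hnn _)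
    nlinarith [h1, h3, hE0]
  induction t generalizing x0 with
  | zero => simp [sdIter]
  | succ t ih =>
    have hre : ∑ σ : Fin (t+1) → Fin m, (∏ j, p (σ j)) *
          ((sdIter A b ω s x0 σ - A⁻¹ *ᵥ b) ⬝ᵥ A *ᵥ (sdIter A b ω s x0 σ - A⁻¹ *ᵥ b))
        = ∑ j : Fin m, ∑ σ : Fin t → Fin m, (p j * ∏ i, p (σ i)) *
            ((sdIter A b ω s (sdStep A b ω (s j) x0) σ - A⁻¹ *ᵥ b) ⬝ᵥ
              A *ᵥ (sdIter A b ω s (sdStep A b ω (s j) x0) σ - A⁻¹ *ᵥ b)) := by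
      rw [← Equiv.sum_comp (Fin.consEquiv fun _ : Fin (t+1) => Fin m), Fintype.sum_prod_type]
      refine Finset.sum_congr rfl fun j _ => Finset.sum_congr rfl fun σ _ => ?_
      have hcons : (Fin.consEquiv fun _ : Fin (t+1) => Fin m) (j, σ) = Fin.cons j σ := rfl
      rw [hcons, SDaux.sdIter_cons, Fin.prod_univ_succ]
      simp only [Fin.cons_zero, Fin.cons_succ]
    rw [hre]
    calc ∑ j : Fin m, ∑ σ : Fin t → Fin m, (p j * ∏ i, p (σ i)) *
            ((sdIter A b ω s (sdStep A b ω (s j) x0) σ - A⁻¹ *ᵥ b) ⬝ᵥ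
              A *ᵥ (sdIter A b ω s (sdStep A b ω (s j) x0) σ - A⁻¹ *ᵥ b))
        = ∑ j : Fin m, p j * ∑ σ : Fin t → Fin m, (∏ i, p (σ i)) *
            ((sdIter A b ω s (sdStep A b ω (s j) x0) σ - A⁻¹ *ᵥ b) ⬝ᵥ
              A *ᵥ (sdIter A b ω s (sdStep A b ω (s j) x0) σ - A⁻¹ *ᵥ b)) := by
          refine Finset.sum_congr rfl fun j _ => ?_
          rw [Finset.mul_sum]
          exact Finset.sum_congr rfl fun σ _ => by ring
      _ ≤ ∑ j : Fin m, p j * (c ^ t *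
            ((sdStep A b ω (s j) x0 - A⁻¹ *ᵥ b) ⬝ᵥ A *ᵥ (sdStep A b ω (s j) x0 - A⁻¹ *ᵥ b))) := by
          refine Finset.sum_le_sum fun j _ => ?_
          exact mul_le_mul_of_nonneg_left (ih (sdStep A b ω (s j) x0)) (hp j).le
      _ = c ^ t * ∑ j : Fin m, p j *
            ((sdStep A b ω (s j) x0 - A⁻¹ *ᵥ b) ⬝ᵥ A *ᵥ (sdStep A b ω (s j) x0 - A⁻¹ *ᵥ b)) := by
          rw [Finset.mul_sum]
          exact Finset.sum_congr rfl fun j _ => by ring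
      _ ≤ c ^ t * (c * ((x0 - A⁻¹ *ᵥ b) ⬝ᵥ A *ᵥ (x0 - A⁻¹ *ᵥ b))) :=
          mul_le_mul_of_nonneg_left (hstep x0) (pow_nonneg hc t)
      _ = c ^ (t+1) * ((x0 - A⁻¹ *ᵥ b) ⬝ᵥ A *ᵥ (x0 - A⁻¹ *ᵥ b)) := by ring
end

section
/- Let s_1, …, s_m ∈ ℝⁿ be nonzero vectors with probabilities p_1, …, p_m > 0 summing to 1, and assume H := Σ_j p_j s_j s_jᵀ/(s_jᵀ A s_j) is invertible. Let W := A^{1/2} H A^{1/2} and let 0 < ω < 2. For any x_0 ∈ ℝⁿ and any t ≥ 0, with x_t(ω) defined for ω ∈ {1,…,m}^t by x_0(ω) = x_0 and x_{j+1}(ω) = x_j(ω) − ω·(s_{ω_{j+1}}ᵀ(A x_j(ω) − b)/(s_{ω_{j+1}}ᵀ A s_{ω_{j+1}})) s_{ω_{j+1}}, we have (1 − ω(2−ω)λ_max(W))^t ‖x_0 − x*‖_A² ≤ Σ_{ω ∈ {1,…,m}^t} (∏_{j=1}^t p_{ω_j}) ‖x_t(ω) − x*‖_A², where λ_max(W)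 is the largest eigenvalue of W. -/
open Matrix BigOperators Finset

section aux

lemma dsymm' {n : ℕ} {W : Matrix (Fin n) (Fin n) ℝ} (hW : W.IsHermitian) (v w : Fin n → ℝ) :
    v ⬝ᵥ W *ᵥ w = (W *ᵥ v) ⬝ᵥ w := by
  rw [dotProduct_mulVec, ← mulVec_transpose,
    show Wᵀ = W from by simpa [Matrix.IsHermitian] using hW]

lemma sum_dot' {n : ℕ} {ι : Type*} (sfin : Finset ι) (f : ι → Fin n → ℝ) (y : Fin n → ℝ) :
    (∑ i ∈ sfin, f i) ⬝ᵥ y = ∑ i ∈ sfin, f i ⬝ᵥ y := by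
  simp only [dotProduct, Finset.sum_apply, Finset.sum_mul]
  rw [Finset.sum_comm]

lemma sum_mulVec' {n : ℕ} {ι : Type*} (sfin : Finset ι) (M : ι → Matrix (Fin n) (Fin n) ℝ)
    (v : Fin n → ℝ) : (∑ j ∈ sfin, M j) *ᵥ v = ∑ j ∈ sfin, M j *ᵥ v := by
  ext i
  simp only [Matrix.mulVec, dotProduct, Finset.sum_apply, Matrix.sum_apply, Finset.sum_mul]
  rw [Finset.sum_comm]

lemma vecMulVec_mulVec' {n : ℕ} (u w v : Fin n → ℝ) :
    vecMulVec u w *ᵥ v = (w ⬝ᵥ v) • u := by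
  ext i
  simp [Matrix.mulVec, vecMulVec_apply, dotProduct, Finset.mul_sum, mul_comm, mul_assoc,
    mul_left_comm]

lemma orth' {n : ℕ} {W : Matrix (Fin n) (Fin n) ℝ} (hW : W.IsHermitian) (i j : Fin n) :
    (hW.eigenvectorBasis i : Fin n → ℝ) ⬝ᵥ (hW.eigenvectorBasis j : Fin n → ℝ)
      = if i = j then 1 else 0 := by
  have h2 := (orthonormal_iff_ite.mp hW.eigenvectorBasis.orthonormal) i j
  rw [← h2]
  simp [dotProduct, PiLp.inner_apply, mul_comm]

lemma decomp' {n : ℕ} {W : Matrix (Fin n) (Fin n) ℝ} (hW : W.IsHermitian) (y : Fin n → ℝ) :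
    ∑ i, ((hW.eigenvectorBasis i : Fin n → ℝ) ⬝ᵥ y) • (hW.eigenvectorBasis i : Fin n → ℝ) = y := by
  have h1 := congrArg WithLp.ofLp (hW.eigenvectorBasis.sum_repr' (WithLp.toLp 2 y : EuclideanSpace ℝ (Fin n)))
  have h2 : ∀ i, (inner ℝ (hW.eigenvectorBasis i) (WithLp.toLp 2 y : EuclideanSpace ℝ (Fin n)) : ℝ)
      = (hW.eigenvectorBasis i : Fin n → ℝ) ⬝ᵥ y := by
    intro i; simp [dotProduct, PiLp.inner_apply, mul_comm]
  simp_rw [← h2]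
  simpa using h1

lemma quad_eq' {n : ℕ} {W : Matrix (Fin n) (Fin n) ℝ} (hW : W.IsHermitian) (y : Fin n → ℝ) :
    y ⬝ᵥ W *ᵥ y = ∑ i, hW.eigenvalues i * ((hW.eigenvectorBasis i : Fin n → ℝ) ⬝ᵥ y) ^ 2 := by
  nth_rewrite 1 [← decomp' hW y]
  rw [sum_dot']
  refine Finset.sum_congr rfl fun i _ => ?_
  have hmv : W *ᵥ (hW.eigenvectorBasis i : Fin n → ℝ)
      = hW.eigenvalues i • (hW.eigenvectorBasis i : Fin n → ℝ) := hW.mulVec_eigenvectorBasis i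
  rw [smul_dotProduct, dsymm' hW, hmv, smul_dotProduct, smul_eq_mul, smul_eq_mul]
  ring

lemma norm_eq' {n : ℕ} {W : Matrix (Fin n) (Fin n) ℝ} (hW : W.IsHermitian) (y : Fin n → ℝ) :
    y ⬝ᵥ y = ∑ i, ((hW.eigenvectorBasis i : Fin n → ℝ) ⬝ᵥ y) ^ 2 := by
  nth_rewrite 1 [← decomp' hW y]
  rw [sum_dot']
  refine Finset.sum_congr rfl fun i _ => ?_
  rw [smul_dotProduct, smul_eq_mul, sq]

lemma quad_bound' {n : ℕ} {W : Matrix (Fin n) (Fin n) ℝ} (hW : W.IsHermitian) (μ : ℝ)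
    (hμ : ∀ i, hW.eigenvalues i ≤ μ) (y : Fin n → ℝ) :
    y ⬝ᵥ W *ᵥ y ≤ μ * (y ⬝ᵥ y) := by
  rw [quad_eq' hW y, norm_eq' hW y, Finset.mul_sum]
  exact Finset.sum_le_sum fun i _ => mul_le_mul_of_nonneg_right (hμ i) (sq_nonneg _)

lemma eig_le' {n : ℕ} {W : Matrix (Fin n) (Fin n) ℝ} (hW : W.IsHermitian)
    (h : ∀ y : Fin n → ℝ, y ⬝ᵥ W *ᵥ y ≤ y ⬝ᵥ y) (i : Fin n) : hW.eigenvalues i ≤ 1 := by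
  have h1 := h (hW.eigenvectorBasis i : Fin n → ℝ)
  rw [quad_eq' hW, norm_eq' hW] at h1
  simp [orth' hW, ite_pow, Finset.sum_ite_eq, mul_ite] at h1
  simpa using h1

lemma step_quad' {n : ℕ} {A : Matrix (Fin n) (Fin n) ℝ} (hAh : A.IsHermitian)
    (sv e : Fin n → ℝ) (ωr : ℝ) (hd : sv ⬝ᵥ A *ᵥ sv ≠ 0) :
    (e - (ωr * (sv ⬝ᵥ A *ᵥ e) / (sv ⬝ᵥ A *ᵥ sv)) • sv) ⬝ᵥ
        A *ᵥ (e - (ωr * (sv ⬝ᵥ A *ᵥ e) / (sv ⬝ᵥ A *ᵥ sv)) • sv)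
      = e ⬝ᵥ A *ᵥ e - ωr * (2 - ωr) * (sv ⬝ᵥ A *ᵥ e) ^ 2 / (sv ⬝ᵥ A *ᵥ sv) := by
  have hes : e ⬝ᵥ A *ᵥ sv = sv ⬝ᵥ A *ᵥ e := by rw [dsymm' hAh, dotProduct_comm]
  simp only [Matrix.mulVec_sub, Matrix.mulVec_smul, dotProduct_sub, sub_dotProduct,
    smul_dotProduct, dotProduct_smul, smul_eq_mul, hes]
  field_simp
  ring

lemma sdIter_cons {n m t : ℕ} (A : Matrix (Fin n) (Fin n) ℝ) (b : Fin n → ℝ) (ω : ℝ)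
    (s : Fin m → Fin n → ℝ) (x0 : Fin n → ℝ) (a : Fin m) (g : Fin t → Fin m) :
    sdIter A b ω s x0 (Fin.cons a g) = sdIter A b ω s (sdStep A b ω (s a) x0) g := by
  simp [sdIter, List.ofFn_succ, Function.comp]

end aux

theorem stmt1 {n m : ℕ} (A : Matrix (Fin n) (Fin n) ℝ) (hA : A.PosDef)
    (b : Fin n → ℝ) (s : Fin m → Fin n → ℝ) (hs : ∀ j, s j ≠ 0)
    (p : Fin m → ℝ) (hp : ∀ j, 0 < p j) (hpsum : ∑ j, p j = 1)
    (H : Matrix (Fin n) (Fin n) ℝ)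
    (hH : H = ∑ j, (p j / (s j ⬝ᵥ A *ᵥ s j)) • vecMulVec (s j) (s j))
    (hHinv : IsUnit H)
    (W : Matrix (Fin n) (Fin n) ℝ)
    (hWdef : W = hA.posSemidef.1.cfc Real.sqrt * H * hA.posSemidef.1.cfc Real.sqrt)
    (hW : W.IsHermitian)
    (ω : ℝ) (hω0 : 0 < ω) (hω2 : ω < 2)
    (x0 : Fin n → ℝ) (t : ℕ) :
    (1 - ω * (2 - ω) * ⨆ i, hW.eigenvalues i) ^ t *
        ((x0 - A⁻¹ *ᵥ b) ⬝ᵥ A *ᵥ (x0 - A⁻¹ *ᵥ b)) ≤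
      ∑ σ : Fin t → Fin m, (∏ j, p (σ j)) *
        ((sdIter A b ω s x0 σ - A⁻¹ *ᵥ b) ⬝ᵥ A *ᵥ (sdIter A b ω s x0 σ - A⁻¹ *ᵥ b)) := by
  set xs : Fin n → ℝ := A⁻¹ *ᵥ b with hxs
  set Q : (Fin n → ℝ) → ℝ := fun x => (x - xs) ⬝ᵥ A *ᵥ (x - xs) with hQdef
  set c : ℝ := ω * (2 - ω) with hcdef
  set μ : ℝ := ⨆ i, hW.eigenvalues i with hμdef
  set S : Matrix (Fin n) (Fin n) ℝ := hA.posSemidef.1.cfc Real.sqrt with hSdef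
  have hAdet : IsUnit A.det := isUnit_iff_ne_zero.mpr (ne_of_gt hA.det_pos)
  have hAb : A *ᵥ xs = b := by
    rw [hxs, Matrix.mulVec_mulVec, Matrix.mul_nonsing_inv _ hAdet, Matrix.one_mulVec]
  have hd : ∀ j, 0 < s j ⬝ᵥ A *ᵥ s j := fun j => by
    have := hA.re_dotProduct_pos (hs j); simpa using this
  have hc0 : 0 < c := by rw [hcdef]; nlinarith
  have hc1 : c ≤ 1 := by rw [hcdef]; nlinarith [sq_nonneg (ω - 1)]
  have hsq : S * S = A := by
    rw [hSdef, ← hA.posSemidef.1.cfc_eq, ← cfc_mul Real.sqrt Real.sqrt A]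
    conv_rhs => rw [← cfc_id' ℝ A (Matrix.isHermitian_iff_isSelfAdjoint.mp hA.posSemidef.1)]
    apply cfc_congr
    intro x hx
    rw [hA.posSemidef.1.spectrum_real_eq_range_eigenvalues] at hx
    obtain ⟨i, rfl⟩ := hx
    exact Real.mul_self_sqrt (hA.posSemidef.eigenvalues_nonneg i)
  have hsqh : S.IsHermitian := by
    rw [hSdef, ← hA.posSemidef.1.cfc_eq]
    exact (cfc_predicate Real.sqrt A : IsSelfAdjoint _)
  have key1 : ∀ e : Fin n → ℝ, e ⬝ᵥ A *ᵥ e = (S *ᵥ e) ⬝ᵥ (S *ᵥ e) := by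
    intro e
    rw [← hsq, ← Matrix.mulVec_mulVec, dsymm' hsqh]
  have key2 : ∀ y : Fin n → ℝ, y ⬝ᵥ W *ᵥ y = (S *ᵥ y) ⬝ᵥ H *ᵥ (S *ᵥ y) := by
    intro y
    rw [hWdef, ← Matrix.mulVec_mulVec, ← Matrix.mulVec_mulVec, dsymm' hsqh]
  have hHquad : ∀ v : Fin n → ℝ,
      v ⬝ᵥ H *ᵥ v = ∑ j, p j * (s j ⬝ᵥ v) ^ 2 / (s j ⬝ᵥ A *ᵥ s j) := by
    intro v
    rw [hH, sum_mulVec', dotProduct_comm, sum_dot']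
    refine Finset.sum_congr rfl fun j _ => ?_
    rw [smul_mulVec, vecMulVec_mulVec', smul_dotProduct, smul_dotProduct,
      smul_eq_mul, smul_eq_mul]
    ring
  have hWle : ∀ y : Fin n → ℝ, y ⬝ᵥ W *ᵥ y ≤ y ⬝ᵥ y := by
    intro y
    rw [key2 y, hHquad]
    have hb : ∀ j : Fin m, p j * (s j ⬝ᵥ S *ᵥ y) ^ 2 / (s j ⬝ᵥ A *ᵥ s j) ≤ p j * (y ⬝ᵥ y) := by
      intro j
      have hCS : (s j ⬝ᵥ S *ᵥ y) ^ 2 ≤ (s j ⬝ᵥ A *ᵥ s j) * (y ⬝ᵥ y) := by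
        rw [dsymm' hsqh, key1 (s j)]
        have := Finset.sum_mul_sq_le_sq_mul_sq Finset.univ (S *ᵥ s j) y
        simpa [dotProduct, sq] using this
      rw [div_le_iff₀ (hd j)]
      calc p j * (s j ⬝ᵥ S *ᵥ y) ^ 2 ≤ p j * ((s j ⬝ᵥ A *ᵥ s j) * (y ⬝ᵥ y)) :=
            mul_le_mul_of_nonneg_left hCS (hp j).le
        _ = p j * (y ⬝ᵥ y) * (s j ⬝ᵥ A *ᵥ s j) := by ring
    calc ∑ j, p j * (s j ⬝ᵥ S *ᵥ y) ^ 2 / (s j ⬝ᵥ A *ᵥ s j) ≤ ∑ j, p j * (y ⬝ᵥ y) :=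
          Finset.sum_le_sum fun j _ => hb j
      _ = y ⬝ᵥ y := by rw [← Finset.sum_mul, hpsum, one_mul]
  have hcμ : c * μ ≤ 1 := by
    rcases Nat.eq_zero_or_pos n with h0 | hpos
    · have : μ = 0 := by
        subst h0
        rw [hμdef, iSup_of_empty', Real.sSup_empty]
      rw [this]; linarith
    · haveI : Nonempty (Fin n) := Fin.pos_iff_nonempty.mp hpos
      have hμ1 : μ ≤ 1 := ciSup_le (eig_le' hW hWle)
      rcases le_or_gt μ 0 with h | h
      · nlinarith
      · nlinarith
  have hr0 : 0 ≤ 1 - c * μ := by linarith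
  have hμub : ∀ i, hW.eigenvalues i ≤ μ :=
    fun i => le_ciSup (Set.Finite.bddAbove (Set.finite_range _)) i
  have hstep : ∀ (j : Fin m) (x : Fin n → ℝ),
      Q (sdStep A b ω (s j) x) =
        Q x - c * (s j ⬝ᵥ A *ᵥ (x - xs)) ^ 2 / (s j ⬝ᵥ A *ᵥ s j) := by
    intro j x
    have hb' : A *ᵥ x - b = A *ᵥ (x - xs) := by rw [Matrix.mulVec_sub, hAb]
    have hq : sdStep A b ω (s j) x - xs
        = (x - xs) - (ω * (s j ⬝ᵥ A *ᵥ (x - xs)) / (s j ⬝ᵥ A *ᵥ s j)) • s j := by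
      rw [sdStep, hb']; abel
    show (sdStep A b ω (s j) x - xs) ⬝ᵥ A *ᵥ (sdStep A b ω (s j) x - xs) = _
    rw [hq, step_quad' hA.isHermitian (s j) (x - xs) ω (hd j).ne']
  have step_exp : ∀ x : Fin n → ℝ,
      (1 - c * μ) * Q x ≤ ∑ j, p j * Q (sdStep A b ω (s j) x) := by
    intro x
    have hsum : ∑ j, p j * Q (sdStep A b ω (s j) x)
        = Q x - c * ((A *ᵥ (x - xs)) ⬝ᵥ H *ᵥ (A *ᵥ (x - xs))) := by
      rw [hHquad, Finset.mul_sum]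
      have : ∀ j : Fin m, p j * Q (sdStep A b ω (s j) x)
          = p j * Q x - c * (p j * (s j ⬝ᵥ A *ᵥ (x - xs)) ^ 2 / (s j ⬝ᵥ A *ᵥ s j)) := by
        intro j
        rw [hstep j x]
        have := (hd j).ne'
        field_simp
      rw [Finset.sum_congr rfl fun j _ => this j, Finset.sum_sub_distrib,
        ← Finset.sum_mul, hpsum, one_mul]
    rw [hsum]
    have hAe : A *ᵥ (x - xs) = S *ᵥ (S *ᵥ (x - xs)) := by
      rw [Matrix.mulVec_mulVec, hsq]
    have h1 : (A *ᵥ (x - xs)) ⬝ᵥ H *ᵥ (A *ᵥ (x - xs))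
        = (S *ᵥ (x - xs)) ⬝ᵥ W *ᵥ (S *ᵥ (x - xs)) := by
      rw [hAe, ← key2]
    have h2 := quad_bound' hW μ hμub (S *ᵥ (x - xs))
    have h3 : (S *ᵥ (x - xs)) ⬝ᵥ (S *ᵥ (x - xs)) = Q x := (key1 (x - xs)).symm
    rw [h3] at h2
    have h4 : c * ((A *ᵥ (x - xs)) ⬝ᵥ H *ᵥ (A *ᵥ (x - xs))) ≤ c * (μ * Q x) := by
      rw [h1]; exact mul_le_mul_of_nonneg_left h2 hc0.le
    linarith
  suffices hind : ∀ (t : ℕ) (x : Fin n → ℝ), (1 - c * μ) ^ t * Q x ≤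
      ∑ σ : Fin t → Fin m, (∏ j, p (σ j)) * Q (sdIter A b ω s x σ) by
    exact hind t x0
  intro t
  induction t with
  | zero =>
      intro x
      rw [Fintype.sum_unique]
      simp [sdIter]
  | succ t ih =>
      intro x
      have hre : ∑ σ : Fin (t + 1) → Fin m, (∏ j, p (σ j)) * Q (sdIter A b ω s x σ)
          = ∑ a : Fin m, ∑ g : Fin t → Fin m,
              p a * ((∏ j, p (g j)) * Q (sdIter A b ω s (sdStep A b ω (s a) x) g)) := by
        rw [← (Fin.consEquiv (fun _ => Fin m)).sum_comp
          (fun σ => (∏ j, p (σ j)) * Q (sdIter A b ω s x σ)), Fintype.sum_prod_type]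
        refine Finset.sum_congr rfl fun a _ => Finset.sum_congr rfl fun g _ => ?_
        have hprod : (∏ j, p ((Fin.consEquiv fun _ => Fin m) (a, g) j))
            = p a * ∏ j, p (g j) := by
          rw [Fin.prod_univ_succ]
          simp [Fin.consEquiv]
        have hiter : sdIter A b ω s x ((Fin.consEquiv fun _ => Fin m) (a, g))
            = sdIter A b ω s (sdStep A b ω (s a) x) g := sdIter_cons A b ω s x a g
        rw [hprod, hiter]
        ring
      rw [hre]
      calc (1 - c * μ) ^ (t + 1) * Q x = (1 - c * μ) ^ t * ((1 - c * μ) * Q x) := by ring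
        _ ≤ (1 - c * μ) ^ t * ∑ j, p j * Q (sdStep A b ω (s j) x) :=
            mul_le_mul_of_nonneg_left (step_exp x) (pow_nonneg hr0 t)
        _ = ∑ a, p a * ((1 - c * μ) ^ t * Q (sdStep A b ω (s a) x)) := by
            rw [Finset.mul_sum]; exact Finset.sum_congr rfl fun a _ => by ring
        _ ≤ ∑ a, p a * ∑ g : Fin t → Fin m,
              (∏ j, p (g j)) * Q (sdIter A b ω s (sdStep A b ω (s a) x) g) :=
            Finset.sum_le_sum fun a _ =>
              mul_le_mul_of_nonneg_left (ih (sdStep A b ω (s a) x)) (hp a).le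
        _ = ∑ a : Fin m, ∑ g : Fin t → Fin m,
              p a * ((∏ j, p (g j)) * Q (sdIter A b ω s (sdStep A b ω (s a) x) g)) := by
            exact Finset.sum_congr rfl fun a _ => by rw [Finset.mul_sum]
end

section
/- Let A = [[a, c], [c, b]] be a 2×2 real symmetric positive definite matrix. For p ∈ (0,1) let W(p) := A^{1/2} Diag(p/a, (1−p)/b) A^{1/2}. Then λ_min(W(p)) = 1/2 − (1/2)√(1 − 4p(1−p)(1 − c²/(ab))), and for every p ∈ (0,1) one has λ_min(W(p)) ≤ λ_min(W(1/2)); i.e., the uniform probabilities p = 1/2 maximize the smallest eigenvalue of W(p). -/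
open Matrix BigOperators Finset

private lemma sum_eig_eq_trace {n : Type*} [Fintype n] [DecidableEq n] {A : Matrix n n ℝ}
    (hA : A.IsHermitian) : ∑ i, hA.eigenvalues i = A.trace := by
  nth_rewrite 2 [hA.spectral_theorem]
  rw [Unitary.conjStarAlgAut_apply]
  rw [Matrix.trace_mul_cycle]
  rw [show (star (hA.eigenvectorUnitary : Matrix n n ℝ)) * hA.eigenvectorUnitary = 1 from
    Unitary.coe_star_mul_self _]
  simp [Matrix.trace_diagonal]

/-- The RCD iteration matrix `W(p) = A^{1/2} Diag(p/a, (1-p)/b) A^{1/2}` for a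
2×2 symmetric positive definite matrix `A = [[a, c], [c, b]]`. -/
noncomputable def W2 (a b c : ℝ) (hA : (!![a, c; c, b]).PosDef) (p : ℝ) :
    Matrix (Fin 2) (Fin 2) ℝ :=
  (hA.posSemidef.1.eigenvectorUnitary.1 *
      Matrix.diagonal ((↑) ∘ (Real.sqrt ·) ∘ hA.posSemidef.1.eigenvalues) *
      (star hA.posSemidef.1.eigenvectorUnitary : Matrix (Fin 2) (Fin 2) ℝ)) *
    Matrix.diagonal ![p / a, (1 - p) / b] *
    (hA.posSemidef.1.eigenvectorUnitary.1 *
      Matrix.diagonal ((↑) ∘ (Real.sqrt ·) ∘ hA.posSemidef.1.eigenvalues) *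
      (star hA.posSemidef.1.eigenvectorUnitary : Matrix (Fin 2) (Fin 2) ℝ))

private lemma W2sqrt_mul_self (a b c : ℝ) (hA : (!![a, c; c, b]).PosDef) :
    (hA.posSemidef.1.eigenvectorUnitary.1 *
      Matrix.diagonal ((↑) ∘ (Real.sqrt ·) ∘ hA.posSemidef.1.eigenvalues) *
      (star hA.posSemidef.1.eigenvectorUnitary : Matrix (Fin 2) (Fin 2) ℝ)) *
    (hA.posSemidef.1.eigenvectorUnitary.1 *
      Matrix.diagonal ((↑) ∘ (Real.sqrt ·) ∘ hA.posSemidef.1.eigenvalues) *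
      (star hA.posSemidef.1.eigenvectorUnitary : Matrix (Fin 2) (Fin 2) ℝ)) = !![a, c; c, b] := by
  have hU : (star hA.posSemidef.1.eigenvectorUnitary : Matrix (Fin 2) (Fin 2) ℝ) *
      hA.posSemidef.1.eigenvectorUnitary.1 = 1 := Unitary.coe_star_mul_self _
  have hs := hA.posSemidef.1.spectral_theorem
  rw [Unitary.conjStarAlgAut_apply] at hs
  refine Eq.trans ?_ hs.symm
  simp only [Matrix.mul_assoc]
  rw [← Matrix.mul_assoc _ (hA.posSemidef.1.eigenvectorUnitary.1), hU, Matrix.one_mul,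
    ← Matrix.mul_assoc (Matrix.diagonal _), Matrix.diagonal_mul_diagonal]
  congr 3
  funext i
  simp [Real.mul_self_sqrt (hA.posSemidef.eigenvalues_nonneg i)]

private lemma key (a b c : ℝ) (hA : (!![a, c; c, b]).PosDef)
    (hHerm : ∀ p : ℝ, (W2 a b c hA p).IsHermitian) (p : ℝ) (hp0 : 0 < p) (hp1 : p < 1) :
    (⨅ i, (hHerm p).eigenvalues i) =
      1 / 2 - (1 / 2) * Real.sqrt (1 - 4 * p * (1 - p) * (1 - c ^ 2 / (a * b))) := by
  have ha : 0 < a := by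
    have := hA.dotProduct_mulVec_pos (x := ![1, 0]) (by intro h; simpa using congrFun h 0)
    simpa [dotProduct, Matrix.mulVec, Fin.sum_univ_two] using this
  have hb : 0 < b := by
    have := hA.dotProduct_mulVec_pos (x := ![0, 1]) (by intro h; simpa using congrFun h 1)
    simpa [dotProduct, Matrix.mulVec, Fin.sum_univ_two] using this
  have hdet : 0 < a * b - c ^ 2 := by
    have := hA.det_pos
    rw [Matrix.det_fin_two_of] at this
    nlinarith
  have ha' : a ≠ 0 := ha.ne'
  have hb' : b ≠ 0 := hb.ne'
  -- trace of W2
  have htr : (W2 a b c hA p).trace = 1 := by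
    rw [W2, Matrix.trace_mul_cycle, W2sqrt_mul_self a b c hA, Matrix.trace_fin_two]
    simp [Matrix.mul_diagonal]
    field_simp
    ring
  -- determinant of W2
  have hd : (W2 a b c hA p).det = p * (1 - p) * (1 - c ^ 2 / (a * b)) := by
    rw [W2, Matrix.det_mul, Matrix.det_mul]
    rw [mul_right_comm, ← Matrix.det_mul, W2sqrt_mul_self a b c hA, Matrix.det_fin_two_of,
      Matrix.det_diagonal, Fin.prod_univ_two]
    simp only [Matrix.cons_val_zero, Matrix.cons_val_one, Matrix.head_cons]
    field_simp
  set e := (hHerm p).eigenvalues with he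
  have hsum : e 0 + e 1 = 1 := by
    have := sum_eig_eq_trace (hHerm p)
    rwa [Fin.sum_univ_two, htr] at this
  have hprod : e 0 * e 1 = p * (1 - p) * (1 - c ^ 2 / (a * b)) := by
    have := (hHerm p).det_eq_prod_eigenvalues
    rw [Fin.prod_univ_two, hd] at this
    exact this.symm
  have hiInf : (⨅ i, e i) = min (e 0) (e 1) := by
    apply le_antisymm
    · exact le_min (ciInf_le (Set.finite_range e).bddBelow 0)
        (ciInf_le (Set.finite_range e).bddBelow 1)
    · apply le_ciInf
      intro i
      fin_cases i
      · exact min_le_left _ _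
      · exact min_le_right _ _
  have hsq : Real.sqrt (1 - 4 * p * (1 - p) * (1 - c ^ 2 / (a * b))) = |e 0 - e 1| := by
    rw [show (1 : ℝ) - 4 * p * (1 - p) * (1 - c ^ 2 / (a * b)) = (e 0 - e 1) ^ 2 by
      nlinarith [hsum, hprod]]
    exact Real.sqrt_sq_eq_abs _
  rw [hiInf, hsq]
  rcases le_total (e 0) (e 1) with h | h
  · rw [min_eq_left h, abs_of_nonpos (by linarith)]; linarith
  · rw [min_eq_right h, abs_of_nonneg (by linarith)]; linarith

theorem stmt4 (a b c : ℝ) (hA : (!![a, c; c, b]).PosDef)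
    (hHerm : ∀ p : ℝ, (W2 a b c hA p).IsHermitian) :
    ∀ p : ℝ, 0 < p → p < 1 →
      (⨅ i, (hHerm p).eigenvalues i) =
          1 / 2 - (1 / 2) * Real.sqrt (1 - 4 * p * (1 - p) * (1 - c ^ 2 / (a * b))) ∧
      (⨅ i, (hHerm p).eigenvalues i) ≤ ⨅ i, (hHerm (1 / 2)).eigenvalues i := by
  intro p hp0 hp1
  have ha : 0 < a := by
    have := hA.dotProduct_mulVec_pos (x := ![1, 0]) (by intro h; simpa using congrFun h 0)
    simpa [dotProduct, Matrix.mulVec, Fin.sum_univ_two] using this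
  have hb : 0 < b := by
    have := hA.dotProduct_mulVec_pos (x := ![0, 1]) (by intro h; simpa using congrFun h 1)
    simpa [dotProduct, Matrix.mulVec, Fin.sum_univ_two] using this
  have hdet : 0 < a * b - c ^ 2 := by
    have := hA.det_pos
    rw [Matrix.det_fin_two_of] at this
    nlinarith
  have hk : 0 ≤ 1 - c ^ 2 / (a * b) := by
    rw [sub_nonneg, div_le_one (by positivity)]
    nlinarith
  have h1 := key a b c hA hHerm p hp0 hp1
  have h2 := key a b c hA hHerm (1/2) (by norm_num) (by norm_num)
  refine ⟨h1, ?_⟩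
  rw [h1, h2]
  have hle : 1 - 1 * (1 - c ^ 2 / (a * b)) ≤ 1 - 4 * p * (1 - p) * (1 - c ^ 2 / (a * b)) := by
    nlinarith [mul_nonneg hk (sq_nonneg (2 * p - 1))]
  have := Real.sqrt_le_sqrt hle
  norm_num at this ⊢
  linarith
end

section
/- For every n ≥ 2 and every T > 0 there exists an n×n real symmetric positive definite matrix A such that, with W(p) := A^{1/2} Diag(p_1/A_{11}, …, p_n/A_{nn}) A^{1/2}, both of the following hold: (i) for the diagonal probabilities p_i = A_{ii}/Tr(A), T·λ_min(W(p)) ≤ λ_min(W(p^u)); and (ii) for the squared-row-norm probabilities p_i = ‖A_{i:}‖²/(Σ_j ‖A_{j:}‖²), T·λ_min(W(p)) ≤ λ_min(W(p^u)); where p^u is the uniform probability vector p^u_i = 1/n and ‖A_{i:}‖² is the squared Euclidean norm of the i-th row of A. -/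
open Matrix BigOperators Finset

/-- The iteration matrix `W(p) = A^{1/2} Diag(p_i / A_{ii}) A^{1/2}` of randomized
coordinate descent with probabilities `p`. -/
noncomputable def Wrcd {n : ℕ} (A : Matrix (Fin n) (Fin n) ℝ) (hA : A.PosDef)
    (p : Fin n → ℝ) : Matrix (Fin n) (Fin n) ℝ :=
  ((hA.posSemidef.1.eigenvectorUnitary : Matrix (Fin n) (Fin n) ℝ) *
      Matrix.diagonal (fun i => Real.sqrt (hA.posSemidef.1.eigenvalues i)) *
      (star hA.posSemidef.1.eigenvectorUnitary : Matrix (Fin n) (Fin n) ℝ)) * Matrix.diagonal (fun i => p i / A i i) *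
    ((hA.posSemidef.1.eigenvectorUnitary : Matrix (Fin n) (Fin n) ℝ) *
      Matrix.diagonal (fun i => Real.sqrt (hA.posSemidef.1.eigenvalues i)) *
      (star hA.posSemidef.1.eigenvectorUnitary : Matrix (Fin n) (Fin n) ℝ))

lemma sqrt_diag_aux {n : ℕ} (d : Fin n → ℝ) (hd : ∀ i, 0 ≤ d i)
    (h : (Matrix.diagonal d).IsHermitian) :
    (h.eigenvectorUnitary : Matrix (Fin n) (Fin n) ℝ) *
      Matrix.diagonal (fun i => Real.sqrt (h.eigenvalues i)) *
      (star h.eigenvectorUnitary : Matrix (Fin n) (Fin n) ℝ) =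
      Matrix.diagonal (fun i => Real.sqrt (d i)) := by
  have key : (h.eigenvectorUnitary : Matrix (Fin n) (Fin n) ℝ) *
      Matrix.diagonal (fun i => Real.sqrt (h.eigenvalues i)) =
      Matrix.diagonal (fun i => Real.sqrt (d i)) *
      (h.eigenvectorUnitary : Matrix (Fin n) (Fin n) ℝ) := by
    ext i k
    rw [Matrix.mul_diagonal, Matrix.diagonal_mul, h.eigenvectorUnitary_apply]
    have hv := congrFun (h.mulVec_eigenvectorBasis k) i
    simp only [Matrix.mulVec_diagonal, Pi.smul_apply, smul_eq_mul] at hv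
    by_cases h0 : (h.eigenvectorBasis k) i = 0
    · simp [h0]
    · have : d i = h.eigenvalues k := mul_right_cancel₀ h0 hv
      rw [this]; ring
  rw [key, mul_assoc, Unitary.mul_star_self_of_mem h.eigenvectorUnitary.2, mul_one]

lemma Wrcd_diag_aux {n : ℕ} (d : Fin n → ℝ) (hd : ∀ i, 0 < d i)
    (hA : (Matrix.diagonal d).PosDef) (p : Fin n → ℝ) :
    Wrcd (Matrix.diagonal d) hA p = Matrix.diagonal p := by
  rw [Wrcd, sqrt_diag_aux d (fun i => (hd i).le) hA.posSemidef.1, Matrix.diagonal_mul_diagonal,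
    Matrix.diagonal_mul_diagonal]
  ext i j
  rcases eq_or_ne i j with rfl | hij
  · have h1 : Real.sqrt (d i) * Real.sqrt (d i) = d i := Real.mul_self_sqrt (hd i).le
    simp only [Matrix.diagonal_apply_eq]
    calc Real.sqrt (d i) * (p i / d i) * Real.sqrt (d i)
        = (Real.sqrt (d i) * Real.sqrt (d i)) * (p i / d i) := by ring
      _ = p i := by
          rw [h1, mul_comm, div_mul_cancel₀ _ (hd i).ne']
  · simp [Matrix.diagonal_apply_ne _ hij]

/-- For a Hermitian matrix equal to `diagonal p`, every value `p j` is attained by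
some eigenvalue, and every eigenvalue equals some `p j`. -/
lemma eig_range_aux {n : ℕ} {W : Matrix (Fin n) (Fin n) ℝ} (hW : W.IsHermitian)
    {p : Fin n → ℝ} (h : W = Matrix.diagonal p) :
    Set.range hW.eigenvalues = Set.range p := by
  rw [← Matrix.IsHermitian.spectrum_real_eq_range_eigenvalues, h, _root_.spectrum_diagonal]

theorem stmt6 (n : ℕ) (hn : 2 ≤ n) (T : ℝ) (hT : 0 < T) :
    ∃ (A : Matrix (Fin n) (Fin n) ℝ) (hA : A.PosDef),
      ∀ (pd pr pu : Fin n → ℝ),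
        (∀ i, pd i = A i i / A.trace) →
        (∀ i, pr i = (∑ j, (A i j) ^ 2) / (∑ k, ∑ j, (A k j) ^ 2)) →
        (∀ i, pu i = 1 / (n : ℝ)) →
        ∀ (hWd : (Wrcd A hA pd).IsHermitian) (hWr : (Wrcd A hA pr).IsHermitian)
          (hWu : (Wrcd A hA pu).IsHermitian),
          T * (⨅ i, hWd.eigenvalues i) ≤ (⨅ i, hWu.eigenvalues i) ∧
          T * (⨅ i, hWr.eigenvalues i) ≤ (⨅ i, hWu.eigenvalues i) := by
  have hn0 : (0 : ℝ) < n := by positivity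
  have hn1 : (1 : ℝ) ≤ (n : ℝ) - 1 := by
    have : (2 : ℝ) ≤ n := by exact_mod_cast hn
    linarith
  -- choose ε
  set ε : ℝ := min 1 (1 / (T * n)) with hε
  have hε0 : 0 < ε := lt_min one_pos (by positivity)
  have hε1 : ε ≤ 1 := min_le_left _ _
  have hεT : T * ε ≤ 1 / n := by
    have h2 : ε ≤ 1 / (T * n) := min_le_right _ _
    calc T * ε ≤ T * (1 / (T * n)) := mul_le_mul_of_nonneg_left h2 hT.le
    _ = 1 / n := by field_simp
  -- the matrix
  set d : Fin n → ℝ := fun i => if i = ⟨0, by omega⟩ then ε else 1 with hd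
  have hdpos : ∀ i, 0 < d i := by
    intro i; rw [hd]; dsimp only; split <;> [exact hε0; exact one_pos]
  refine ⟨Matrix.diagonal d, Matrix.posDef_diagonal_iff.mpr hdpos, ?_⟩
  intro pd pr pu hpd hpr hpu hWd hWr hWu
  set i0 : Fin n := ⟨0, by omega⟩ with hi0
  -- basic sums
  have hne : Nonempty (Fin n) := ⟨i0⟩
  have hsum : ∀ (c : ℝ), c ≤ 1 → 0 < c → (∑ i, (if i = i0 then c else 1)) = c + ((n : ℝ) - 1) := by
    intro c _ _
    calc (∑ i : Fin n, if i = i0 then c else 1)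
        = ∑ i : Fin n, ((if i = i0 then c - 1 else 0) + 1) :=
          Finset.sum_congr rfl (fun i _ => by split <;> ring)
      _ = (∑ i : Fin n, if i = i0 then c - 1 else 0) + ∑ _i : Fin n, (1:ℝ) :=
          Finset.sum_add_distrib
      _ = (c - 1) + n := by
          rw [Finset.sum_ite_eq' Finset.univ i0 (fun _ => c - 1)]; simp
      _ = c + ((n:ℝ) - 1) := by ring
  -- traces
  have htr : (Matrix.diagonal d).trace = ε + ((n : ℝ) - 1) := by
    rw [Matrix.trace_diagonal]
    exact hsum ε hε1 hε0
  have htrpos : (0 : ℝ) < ε + ((n : ℝ) - 1) := by linarith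
  -- row norms
  have hrow : ∀ i, (∑ j, ((Matrix.diagonal d) i j) ^ 2) = (d i) ^ 2 := by
    intro i
    rw [Finset.sum_eq_single i]
    · simp
    · intro j _ hj; rw [Matrix.diagonal_apply_ne' _ hj]; ring
    · simp
  have hrtot : (∑ k, ∑ j, ((Matrix.diagonal d) k j) ^ 2) = ε ^ 2 + ((n : ℝ) - 1) := by
    simp_rw [hrow]
    have : ∀ i, (d i) ^ 2 = if i = i0 then ε ^ 2 else 1 := by
      intro i; rw [hd]; dsimp only; split <;> simp
    simp_rw [this]
    exact hsum (ε ^ 2) (by nlinarith) (by positivity)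
  have hrtotpos : (0 : ℝ) < ε ^ 2 + ((n : ℝ) - 1) := by nlinarith
  -- W identities
  have hWdeq := Wrcd_diag_aux d hdpos (Matrix.posDef_diagonal_iff.mpr hdpos) pd
  have hWreq := Wrcd_diag_aux d hdpos (Matrix.posDef_diagonal_iff.mpr hdpos) pr
  have hWueq := Wrcd_diag_aux d hdpos (Matrix.posDef_diagonal_iff.mpr hdpos) pu
  -- uniform eigenvalues
  have hbdd : ∀ (f : Fin n → ℝ), BddBelow (Set.range f) := fun f =>
    (Set.finite_range f).bddBelow
  have huEig : ∀ i, hWu.eigenvalues i = 1 / n := by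
    intro i
    have := eig_range_aux hWu hWueq
    have hmem : hWu.eigenvalues i ∈ Set.range pu := this ▸ Set.mem_range_self i
    obtain ⟨j, hj⟩ := hmem
    rw [← hj, hpu j]
  have huInf : (⨅ i, hWu.eigenvalues i) = 1 / n := by
    simp_rw [huEig]; exact ciInf_const
  -- diag probability: some eigenvalue equals pd i0
  have hdInf : (⨅ i, hWd.eigenvalues i) ≤ ε / (ε + ((n : ℝ) - 1)) := by
    have := eig_range_aux hWd hWdeq
    have hmem : pd i0 ∈ Set.range hWd.eigenvalues := this ▸ Set.mem_range_self i0
    obtain ⟨j, hj⟩ := hmem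
    have : hWd.eigenvalues j = ε / (ε + ((n : ℝ) - 1)) := by
      rw [hj, hpd i0, htr, Matrix.diagonal_apply_eq]
      simp [hd]
    calc (⨅ i, hWd.eigenvalues i) ≤ hWd.eigenvalues j := ciInf_le (hbdd _) j
    _ = _ := this
  have hrInf : (⨅ i, hWr.eigenvalues i) ≤ ε ^ 2 / (ε ^ 2 + ((n : ℝ) - 1)) := by
    have := eig_range_aux hWr hWreq
    have hmem : pr i0 ∈ Set.range hWr.eigenvalues := this ▸ Set.mem_range_self i0
    obtain ⟨j, hj⟩ := hmem
    have : hWr.eigenvalues j = ε ^ 2 / (ε ^ 2 + ((n : ℝ) - 1)) := by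
      rw [hj, hpr i0, hrtot, hrow i0]
      simp [hd]
    calc (⨅ i, hWr.eigenvalues i) ≤ hWr.eigenvalues j := ciInf_le (hbdd _) j
    _ = _ := this
  rw [huInf]
  have hεd : ε / (ε + ((n : ℝ) - 1)) ≤ ε := by
    rw [div_le_iff₀ htrpos]
    calc ε = ε * 1 := (mul_one ε).symm
    _ ≤ ε * (ε + ((n : ℝ) - 1)) :=
        mul_le_mul_of_nonneg_left (by linarith) hε0.le
  have hεr : ε ^ 2 / (ε ^ 2 + ((n : ℝ) - 1)) ≤ ε := by
    rw [div_le_iff₀ hrtotpos]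
    have hsq : (0:ℝ) ≤ ε ^ 2 := sq_nonneg ε
    calc ε ^ 2 = ε * ε := sq ε
    _ ≤ ε * (ε ^ 2 + ((n : ℝ) - 1)) :=
        mul_le_mul_of_nonneg_left (by linarith) hε0.le
  constructor
  · calc T * (⨅ i, hWd.eigenvalues i) ≤ T * (ε / (ε + ((n : ℝ) - 1))) := by
          exact mul_le_mul_of_nonneg_left hdInf hT.le
    _ ≤ T * ε := mul_le_mul_of_nonneg_left hεd hT.le
    _ ≤ 1 / n := hεT
  · calc T * (⨅ i, hWr.eigenvalues i) ≤ T * (ε ^ 2 / (ε ^ 2 + ((n : ℝ) - 1))) := by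
          exact mul_le_mul_of_nonneg_left hrInf hT.le
    _ ≤ T * ε := mul_le_mul_of_nonneg_left hεr hT.le
    _ ≤ 1 / n := hεT
end

section
/- For every n ≥ 2 and every T > 1 there exist an n×n real symmetric positive definite matrix A, a vector b ∈ ℝⁿ, and a starting point x_0 ∈ ℝⁿ with x_0 ≠ x* := A⁻¹b, such that for every probability vector p (p_i > 0, Σ_i p_i = 1) and every t ≥ 0, the randomized coordinate descent iterates satisfy Σ_{ω ∈ {1,…,n}^t} (∏_{j=1}^t p_{ω_j}) ‖x_t(ω) − x*‖_A² ≥ (1 − 1/T)^{2t} ‖x_0 − x*‖_A², where x_t(ω) is defined by x_0(ω) = x_0 and x_{j+1}(ω) = x_j(ω) − ((A_{ω_{j+1},:} x_j(ω) − b_{ω_{j+1}})/A_{ω_{j+1},ω_{j+1}}) e_{ω_{j+1}}. -/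
open Matrix BigOperators Finset

/-- One step of randomized coordinate descent along coordinate `i`:
`x ↦ x − ((A_{i,:} x − b_i)/A_{ii}) e_i`. -/
noncomputable def rcdStep {n : ℕ} (A : Matrix (Fin n) (Fin n) ℝ) (b : Fin n → ℝ)
    (i : Fin n) (x : Fin n → ℝ) : Fin n → ℝ :=
  x - (((A *ᵥ x) i - b i) / A i i) • (Pi.single i 1 : Fin n → ℝ)

/-- The RCD iterate after applying coordinates `σ 0, σ 1, …` in order from `x0`. -/
noncomputable def rcdIter {n t : ℕ} (A : Matrix (Fin n) (Fin n) ℝ) (b : Fin n → ℝ)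
    (x0 : Fin n → ℝ) (σ : Fin t → Fin n) : Fin n → ℝ :=
  (List.ofFn σ).foldl (fun x i => rcdStep A b i x) x0

/- ### Auxiliary lemmas -/

lemma sum_dot {m : ℕ} {ι : Type*} [Fintype ι] (f : ι → Fin m → ℝ) (u : Fin m → ℝ) :
    (∑ σ, f σ) ⬝ᵥ u = ∑ σ, f σ ⬝ᵥ u := by
  simp only [dotProduct, Finset.sum_apply, Finset.sum_mul]
  exact Finset.sum_comm

lemma sym_dot {m : ℕ} {P : Matrix (Fin m) (Fin m) ℝ} (hP : Pᵀ = P) (u v : Fin m → ℝ) :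
    u ⬝ᵥ P *ᵥ v = v ⬝ᵥ P *ᵥ u := by
  conv_lhs => rw [← hP]
  rw [Matrix.mulVec_transpose, dotProduct_comm, ← Matrix.dotProduct_mulVec]

lemma psd_nonneg {m : ℕ} {P : Matrix (Fin m) (Fin m) ℝ} (hP : P.PosSemidef) (x : Fin m → ℝ) :
    0 ≤ x ⬝ᵥ P *ᵥ x := by
  have := hP.dotProduct_mulVec_nonneg x
  simpa using this

lemma psd_cs {m : ℕ} {P : Matrix (Fin m) (Fin m) ℝ} (hP : P.PosSemidef)
    (hsym : ∀ u v : Fin m → ℝ, u ⬝ᵥ P *ᵥ v = v ⬝ᵥ P *ᵥ u)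
    (x y : Fin m → ℝ) :
    (x ⬝ᵥ P *ᵥ y) ^ 2 ≤ (x ⬝ᵥ P *ᵥ x) * (y ⬝ᵥ P *ᵥ y) := by
  have key : ∀ t : ℝ, 0 ≤ (y ⬝ᵥ P *ᵥ y) * (t * t) + (2 * (x ⬝ᵥ P *ᵥ y)) * t + (x ⬝ᵥ P *ᵥ x) := by
    intro t
    have h := psd_nonneg hP (x + t • y)
    have e1 : (x + t • y) ⬝ᵥ P *ᵥ (x + t • y)
        = (y ⬝ᵥ P *ᵥ y) * (t * t) + (2 * (x ⬝ᵥ P *ᵥ y)) * t + (x ⬝ᵥ P *ᵥ x) := by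
      rw [Matrix.mulVec_add, Matrix.mulVec_smul, add_dotProduct, smul_dotProduct,
        dotProduct_add, dotProduct_add]
      simp only [dotProduct_smul, smul_eq_mul]
      rw [hsym y x]
      ring
    linarith [e1 ▸ h]
  have := discrim_le_zero key
  unfold discrim at this
  nlinarith [this]

lemma jensen {m : ℕ} {P : Matrix (Fin m) (Fin m) ℝ} (hP : P.PosSemidef) (hPs : Pᵀ = P)
    {ι : Type*} [Fintype ι] (w : ι → ℝ) (hw : ∀ σ, 0 ≤ w σ) (hw1 : ∑ σ, w σ = 1)
    (z : ι → Fin m → ℝ) :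
    (∑ σ, w σ • z σ) ⬝ᵥ P *ᵥ (∑ σ, w σ • z σ) ≤ ∑ σ, w σ * (z σ ⬝ᵥ P *ᵥ z σ) := by
  set zb := ∑ σ, w σ • z σ with hzb
  have hnn : 0 ≤ ∑ σ, w σ * ((z σ - zb) ⬝ᵥ P *ᵥ (z σ - zb)) := by
    apply Finset.sum_nonneg
    intro σ _
    have := hP.dotProduct_mulVec_nonneg (z σ - zb)
    have h2 : (0:ℝ) ≤ (z σ - zb) ⬝ᵥ P *ᵥ (z σ - zb) := by simpa using this
    exact mul_nonneg (hw σ) h2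
  have expand : ∑ σ, w σ * ((z σ - zb) ⬝ᵥ P *ᵥ (z σ - zb))
      = (∑ σ, w σ * (z σ ⬝ᵥ P *ᵥ z σ)) - zb ⬝ᵥ P *ᵥ zb := by
    have e1 : ∀ σ, (z σ - zb) ⬝ᵥ P *ᵥ (z σ - zb)
        = z σ ⬝ᵥ P *ᵥ z σ - 2 * (z σ ⬝ᵥ P *ᵥ zb) + zb ⬝ᵥ P *ᵥ zb := by
      intro σ
      rw [Matrix.mulVec_sub, sub_dotProduct, dotProduct_sub, dotProduct_sub,
        sym_dot hPs zb (z σ)]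
      ring
    have e2 : ∑ σ, (w σ • z σ) ⬝ᵥ (P *ᵥ zb) = zb ⬝ᵥ P *ᵥ zb := by
      rw [← sum_dot]
    calc ∑ σ, w σ * ((z σ - zb) ⬝ᵥ P *ᵥ (z σ - zb))
        = ∑ σ, (w σ * (z σ ⬝ᵥ P *ᵥ z σ) - 2 * ((w σ • z σ) ⬝ᵥ P *ᵥ zb) + w σ * (zb ⬝ᵥ P *ᵥ zb)) := by
          apply Finset.sum_congr rfl
          intro σ _
          rw [e1 σ]
          simp only [smul_dotProduct, smul_eq_mul]
          ring
      _ = (∑ σ, w σ * (z σ ⬝ᵥ P *ᵥ z σ)) - 2 * (zb ⬝ᵥ P *ᵥ zb) + 1 * (zb ⬝ᵥ P *ᵥ zb) := by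
          rw [Finset.sum_add_distrib, Finset.sum_sub_distrib, ← Finset.sum_mul, hw1,
            ← Finset.mul_sum, e2]
      _ = (∑ σ, w σ * (z σ ⬝ᵥ P *ᵥ z σ)) - zb ⬝ᵥ P *ᵥ zb := by ring
  linarith [expand ▸ hnn]

lemma iter_zero {n : ℕ} (A : Matrix (Fin n) (Fin n) ℝ) (b x : Fin n → ℝ) (σ : Fin 0 → Fin n) :
    rcdIter A b x σ = x := rfl

lemma iter_cons {n t : ℕ} (A : Matrix (Fin n) (Fin n) ℝ) (b x : Fin n → ℝ)
    (i : Fin n) (σ : Fin t → Fin n) :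
    rcdIter A b x (Fin.cons i σ) = rcdIter A b (rcdStep A b i x) σ := by
  unfold rcdIter
  rw [List.ofFn_succ]
  simp [Fin.cons_succ]

lemma step_sum {n : ℕ} (A : Matrix (Fin n) (Fin n) ℝ) (hAd : ∀ i, A i i = 1)
    (p : Fin n → ℝ) (hp1 : ∑ i, p i = 1) (x : Fin n → ℝ) :
    ∑ i, p i • rcdStep A 0 i x = (1 - Matrix.diagonal p * A) *ᵥ x := by
  have hstep : ∀ i, rcdStep A 0 i x = x - Pi.single i ((A *ᵥ x) i) := by
    intro i
    unfold rcdStep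
    rw [hAd i]
    simp only [Pi.zero_apply, sub_zero, div_one]
    congr 1
    ext j
    by_cases h : j = i
    · subst h; simp
    · simp [Pi.single_eq_of_ne h]
  calc ∑ i, p i • rcdStep A 0 i x
      = ∑ i, (p i • x - Pi.single i (p i * (A *ᵥ x) i)) := by
        apply Finset.sum_congr rfl
        intro i _
        rw [hstep i, smul_sub]
        congr 1
        ext j
        by_cases h : j = i
        · subst h; simp
        · simp [Pi.single_eq_of_ne h]
    _ = (∑ i, p i) • x - ∑ i, Pi.single i (p i * (A *ᵥ x) i) := by
        rw [Finset.sum_sub_distrib, Finset.sum_smul]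
    _ = x - fun j => p j * (A *ᵥ x) j := by
        rw [hp1, one_smul, Finset.univ_sum_single (fun i => p i * (A *ᵥ x) i)]
    _ = (1 - Matrix.diagonal p * A) *ᵥ x := by
        rw [Matrix.sub_mulVec, Matrix.one_mulVec]
        congr 1
        ext j
        simp [← Matrix.mulVec_mulVec, Matrix.mulVec_diagonal]

lemma expect_iter {n : ℕ} (A : Matrix (Fin n) (Fin n) ℝ) (hAd : ∀ i, A i i = 1)
    (p : Fin n → ℝ) (hp1 : ∑ i, p i = 1) :
    ∀ (t : ℕ) (x : Fin n → ℝ),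
      ∑ σ : Fin t → Fin n, (∏ j, p (σ j)) • rcdIter A 0 x σ
        = ((1 - Matrix.diagonal p * A) ^ t) *ᵥ x := by
  intro t
  induction t with
  | zero =>
      intro x
      simp [iter_zero, Matrix.one_mulVec]
  | succ t ih =>
      intro x
      set M := 1 - Matrix.diagonal p * A with hM
      have hsum := Fintype.sum_equiv (Fin.consEquiv (fun _ : Fin (t+1) => Fin n))
        (fun q : Fin n × (Fin t → Fin n) =>
          (∏ j, p ((Fin.consEquiv (fun _ : Fin (t+1) => Fin n)) q j)) •
            rcdIter A 0 x ((Fin.consEquiv (fun _ : Fin (t+1) => Fin n)) q))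
        (fun σ : Fin (t+1) → Fin n => (∏ j, p (σ j)) • rcdIter A 0 x σ)
        (fun q => rfl)
      rw [← hsum]
      have hc : ∀ (q : Fin n × (Fin t → Fin n)),
          (Fin.consEquiv (fun _ : Fin (t+1) => Fin n)) q = Fin.cons q.1 q.2 := fun q => rfl
      rw [Fintype.sum_prod_type]
      calc ∑ i, ∑ σ' : Fin t → Fin n,
            (∏ j, p ((Fin.consEquiv (fun _ : Fin (t+1) => Fin n)) (i, σ') j)) •
              rcdIter A 0 x ((Fin.consEquiv (fun _ : Fin (t+1) => Fin n)) (i, σ'))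
          = ∑ i, p i • ∑ σ' : Fin t → Fin n,
              (∏ j, p (σ' j)) • rcdIter A 0 (rcdStep A 0 i x) σ' := by
            apply Finset.sum_congr rfl
            intro i _
            rw [Finset.smul_sum]
            apply Finset.sum_congr rfl
            intro σ' _
            rw [hc (i, σ')]
            have hpc : (∏ j : Fin (t+1), p (Fin.cons (α := fun _ : Fin (t+1) => Fin n) i σ' j))
                = p i * ∏ j, p (σ' j) := by
              simp [Fin.prod_univ_succ]
            simp only [iter_cons]
            rw [hpc, mul_smul]
        _ = ∑ i, p i • (M ^ t *ᵥ rcdStep A 0 i x) := by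
            apply Finset.sum_congr rfl
            intro i _
            rw [ih]
        _ = M ^ t *ᵥ ∑ i, p i • rcdStep A 0 i x := by
            rw [← Matrix.mulVecLin_apply, map_sum]
            apply Finset.sum_congr rfl
            intro i _
            rw [LinearMap.map_smul, Matrix.mulVecLin_apply]
        _ = M ^ (t+1) *ᵥ x := by
            rw [step_sum A hAd p hp1 x, ← hM, Matrix.mulVec_mulVec, ← pow_succ]

lemma sum_prod_probs {n : ℕ} (p : Fin n → ℝ) (hp1 : ∑ i, p i = 1) :
    ∀ t : ℕ, ∑ σ : Fin t → Fin n, ∏ j, p (σ j) = 1 := by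
  intro t
  induction t with
  | zero => simp
  | succ t ih =>
      have hsum := Fintype.sum_equiv (Fin.consEquiv (fun _ : Fin (t+1) => Fin n))
        (fun q : Fin n × (Fin t → Fin n) =>
          (∏ j, p ((Fin.consEquiv (fun _ : Fin (t+1) => Fin n)) q j)))
        (fun σ : Fin (t+1) → Fin n => ∏ j, p (σ j))
        (fun q => rfl)
      rw [← hsum, Fintype.sum_prod_type]
      calc ∑ i, ∑ σ' : Fin t → Fin n,
            (∏ j, p ((Fin.consEquiv (fun _ : Fin (t+1) => Fin n)) (i, σ') j))
          = ∑ i, p i * ∑ σ' : Fin t → Fin n, ∏ j, p (σ' j) := by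
            apply Finset.sum_congr rfl
            intro i _
            rw [Finset.mul_sum]
            apply Finset.sum_congr rfl
            intro σ' _
            simp [Fin.prod_univ_succ]
        _ = 1 := by
            rw [Finset.sum_congr rfl (fun i _ => by rw [ih, mul_one]), hp1]

/- ### The concrete matrix -/

noncomputable def myA (n : ℕ) (T : ℝ) : Matrix (Fin n) (Fin n) ℝ :=
  (1/T) • (1 : Matrix (Fin n) (Fin n) ℝ) + (1 - 1/T) • (Matrix.of fun _ _ => (1:ℝ))

lemma myA_mulVec {n : ℕ} (T : ℝ) (x : Fin n → ℝ) :
    myA n T *ᵥ x = (1/T) • x + (1 - 1/T) • (fun _ => ∑ j, x j) := by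
  unfold myA
  rw [Matrix.add_mulVec, Matrix.smul_mulVec, Matrix.smul_mulVec, Matrix.one_mulVec]
  congr 1
  congr 1
  ext i
  simp [Matrix.mulVec, dotProduct]

lemma myA_diag {n : ℕ} (T : ℝ) (i : Fin n) : myA n T i i = 1 := by
  unfold myA
  simp [Matrix.one_apply]

lemma myA_quad {n : ℕ} (T : ℝ) (x : Fin n → ℝ) :
    x ⬝ᵥ myA n T *ᵥ x = (1/T) * (x ⬝ᵥ x) + (1 - 1/T) * (∑ j, x j)^2 := by
  rw [myA_mulVec, dotProduct_add]
  simp only [dotProduct_smul, smul_eq_mul]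
  congr 1
  simp [dotProduct, Finset.sum_mul, sq]

lemma myA_transpose {n : ℕ} (T : ℝ) : (myA n T)ᵀ = myA n T := by
  ext i j
  simp only [Matrix.transpose_apply, myA, Matrix.add_apply, Matrix.smul_apply, Matrix.of_apply,
    Matrix.one_apply, smul_eq_mul]
  by_cases h : i = j
  · subst h; rfl
  · rw [if_neg h, if_neg (Ne.symm h)]

lemma myA_posdef {n : ℕ} (T : ℝ) (hT : 1 < T) : (myA n T).PosDef := by
  rw [Matrix.posDef_iff_dotProduct_mulVec]
  constructor
  · show (myA n T)ᴴ = myA n T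
    have h : (myA n T)ᴴ = (myA n T)ᵀ := by
      ext i j
      simp [Matrix.conjTranspose_apply]
    rw [h]
    exact myA_transpose T
  · intro x hx
    have h1 : star x = x := by simp
    rw [h1, myA_quad]
    have h2 : 0 < x ⬝ᵥ x := by
      have hnn : 0 ≤ x ⬝ᵥ x := Finset.sum_nonneg (fun i _ => mul_self_nonneg _)
      have hne := (dotProduct_self_eq_zero (v := x)).not.mpr hx
      exact hnn.lt_of_ne (Ne.symm hne)
    have hT0 : 0 < 1/T := by positivity
    have hρ : 0 ≤ 1 - 1/T := by
      have : 1/T < 1 := by rw [div_lt_one (by linarith)]; linarith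
      linarith
    nlinarith [sq_nonneg (∑ j, x j)]

theorem stmt9 (n : ℕ) (hn : 2 ≤ n) (T : ℝ) (hT : 1 < T) :
    ∃ (A : Matrix (Fin n) (Fin n) ℝ) (hA : A.PosDef) (b x0 : Fin n → ℝ),
      x0 ≠ A⁻¹ *ᵥ b ∧
      ∀ (p : Fin n → ℝ), (∀ i, 0 < p i) → (∑ i, p i) = 1 →
      ∀ t : ℕ,
        (1 - 1 / T) ^ (2 * t) * ((x0 - A⁻¹ *ᵥ b) ⬝ᵥ A *ᵥ (x0 - A⁻¹ *ᵥ b)) ≤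
          ∑ σ : Fin t → Fin n, (∏ j, p (σ j)) *
            ((rcdIter A b x0 σ - A⁻¹ *ᵥ b) ⬝ᵥ A *ᵥ (rcdIter A b x0 σ - A⁻¹ *ᵥ b)) := by
  have hT0 : 0 < T := lt_trans one_pos hT
  have hTinv : 0 < 1/T := by positivity
  have hTinv1 : 1/T < 1 := by rw [div_lt_one hT0]; exact hT
  set ρ : ℝ := 1 - 1/T with hρdef
  have hρ0 : 0 < ρ := by simp only [hρdef]; linarith
  have hρ1 : ρ < 1 := by simp only [hρdef]; linarith
  set A := myA n T with hAdef
  have hAt : Aᵀ = A := myA_transpose T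
  have hApd : A.PosDef := myA_posdef T hT
  have hApsd : A.PosSemidef := hApd.posSemidef
  set i0 : Fin n := ⟨0, by omega⟩ with hi0
  set i1 : Fin n := ⟨1, by omega⟩ with hi1
  have hne : i0 ≠ i1 := by
    simp only [hi0, hi1, Ne, Fin.mk.injEq]
    omega
  set y0 : Fin n → ℝ := Pi.single i0 1 - Pi.single i1 1 with hy0def
  have hy0i0 : y0 i0 = 1 := by
    simp [hy0def, Pi.single_apply, hne, Ne.symm hne]
  have hsumy0 : ∑ j, y0 j = 0 := by
    simp [hy0def, Finset.sum_sub_distrib]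
  have hAy0 : A *ᵥ y0 = (1/T) • y0 := by
    rw [hAdef, myA_mulVec, hsumy0]
    ext j
    simp
  have hdots : y0 ⬝ᵥ y0 = 2 := by
    rw [hy0def]
    rw [sub_dotProduct, single_dotProduct, single_dotProduct]
    simp [Pi.single_apply, hne, Ne.symm hne]
    norm_num
  have hq0 : y0 ⬝ᵥ A *ᵥ y0 = 2/T := by
    rw [hAy0, dotProduct_smul, hdots]
    simp
    ring
  have hy0sq : ∀ i, y0 i ^ 2 ≤ 1 := by
    intro i
    simp only [hy0def, Pi.sub_apply, Pi.single_apply]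
    split_ifs <;> norm_num
  refine ⟨A, hApd, 0, y0, ?_, ?_⟩
  · rw [Matrix.mulVec_zero]
    intro h
    have := congrFun h i0
    rw [hy0i0] at this
    simp at this
  · intro p hp hp1 t
    rw [Matrix.mulVec_zero]
    simp only [sub_zero]
    set M : Matrix (Fin n) (Fin n) ℝ := 1 - Matrix.diagonal p * A with hMdef
    set B : Matrix (Fin n) (Fin n) ℝ := A * M with hBdef
    have hMtA : Mᵀ * A = A * M := by
      have hMt : Mᵀ = 1 - A * Matrix.diagonal p := by
        rw [hMdef, Matrix.transpose_sub, Matrix.transpose_one, Matrix.transpose_mul,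
          Matrix.diagonal_transpose, hAt]
      rw [hMt, hMdef, Matrix.sub_mul, Matrix.mul_sub, Matrix.one_mul, Matrix.mul_one,
        Matrix.mul_assoc]
    have hcomm : ∀ k : ℕ, (Mᵀ)^k * A = A * M^k := by
      intro k
      induction k with
      | zero => simp
      | succ k ih =>
          rw [pow_succ, pow_succ, Matrix.mul_assoc, hMtA, ← Matrix.mul_assoc, ih,
            Matrix.mul_assoc]
    set c : ℕ → ℝ := fun k => y0 ⬝ᵥ (A * M^k) *ᵥ y0 with hcdef
    have key : ∀ a b : ℕ, (M^a *ᵥ y0) ⬝ᵥ (A *ᵥ (M^b *ᵥ y0)) = c (a+b) := by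
      intro a b
      rw [← Matrix.vecMul_transpose, ← Matrix.dotProduct_mulVec, Matrix.mulVec_mulVec,
        Matrix.mulVec_mulVec, Matrix.transpose_pow, hcomm a, Matrix.mul_assoc, ← pow_add]
    have keyB : ∀ a b : ℕ, (M^a *ᵥ y0) ⬝ᵥ (B *ᵥ (M^b *ᵥ y0)) = c (a+b+1) := by
      intro a b
      have h1 : B *ᵥ (M^b *ᵥ y0) = A *ᵥ (M^(b+1) *ᵥ y0) := by
        rw [Matrix.mulVec_mulVec, Matrix.mulVec_mulVec, hBdef, Matrix.mul_assoc, ← pow_succ']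
      rw [h1, key a (b+1), ← Nat.add_assoc]
    have hBt : Bᵀ = B := by
      rw [hBdef, Matrix.transpose_mul, hAt, hMtA]
    have hBform : ∀ x, x ⬝ᵥ B *ᵥ x = x ⬝ᵥ A *ᵥ x - ∑ i, p i * ((A *ᵥ x) i)^2 := by
      intro x
      have h1 : B *ᵥ x = A *ᵥ x - A *ᵥ (Matrix.diagonal p *ᵥ (A *ᵥ x)) := by
        rw [hBdef, hMdef, Matrix.mul_sub, Matrix.mul_one, Matrix.sub_mulVec]
        congr 1
        rw [Matrix.mulVec_mulVec, Matrix.mulVec_mulVec, Matrix.mul_assoc]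
      rw [h1, dotProduct_sub]
      congr 1
      rw [sym_dot hAt x (Matrix.diagonal p *ᵥ (A *ᵥ x))]
      simp only [dotProduct]
      apply Finset.sum_congr rfl
      intro i _
      rw [Matrix.mulVec_diagonal]
      ring
    have hviq : ∀ x (i : Fin n), ((A *ᵥ x) i)^2 ≤ x ⬝ᵥ A *ᵥ x := by
      intro x i
      have hcs := psd_cs hApsd (sym_dot hAt) (Pi.single i 1) x
      have hii : (Pi.single i 1 : Fin n → ℝ) ⬝ᵥ A *ᵥ (Pi.single i 1 : Fin n → ℝ) = 1 := by
        rw [single_dotProduct, Matrix.mulVec_single, one_mul]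
        show A i i * 1 = 1
        rw [mul_one]
        exact myA_diag T i
      rw [single_dotProduct, one_mul, hii, one_mul] at hcs
      exact hcs
    have hBpsd : B.PosSemidef := by
      rw [Matrix.posSemidef_iff_dotProduct_mulVec]
      constructor
      · show Bᴴ = B
        have h : Bᴴ = Bᵀ := by
          ext i j
          simp [Matrix.conjTranspose_apply]
        rw [h, hBt]
      · intro x
        have h1 : star x = x := by simp
        rw [h1, hBform]
        have h2 : ∑ i, p i * ((A *ᵥ x) i)^2 ≤ ∑ i, p i * (x ⬝ᵥ A *ᵥ x) := by
          apply Finset.sum_le_sum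
          intro i _
          exact mul_le_mul_of_nonneg_left (hviq x i) (hp i).le
        rw [← Finset.sum_mul, hp1, one_mul] at h2
        linarith
    have hc0 : c 0 = 2/T := by
      simp only [hcdef, pow_zero, Matrix.mul_one]
      exact hq0
    have hc1 : ρ * c 0 ≤ c 1 := by
      have e1 : c 1 = y0 ⬝ᵥ B *ᵥ y0 := by
        simp only [hcdef, pow_one, hBdef]
      rw [e1, hBform y0, hq0, hc0]
      have h3 : ∑ i, p i * ((A *ᵥ y0) i)^2 ≤ (1/T)^2 := by
        have h4 : ∀ i : Fin n, p i * ((A *ᵥ y0) i)^2 ≤ p i * (1/T)^2 := by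
          intro i
          apply mul_le_mul_of_nonneg_left _ (hp i).le
          rw [hAy0]
          simp only [Pi.smul_apply, smul_eq_mul, mul_pow]
          calc (1/T)^2 * (y0 i)^2 ≤ (1/T)^2 * 1 :=
                mul_le_mul_of_nonneg_left (hy0sq i) (by positivity)
            _ = (1/T)^2 := mul_one _
        calc ∑ i, p i * ((A *ᵥ y0) i)^2 ≤ ∑ i, p i * (1/T)^2 := Finset.sum_le_sum (fun i _ => h4 i)
          _ = (1/T)^2 := by rw [← Finset.sum_mul, hp1, one_mul]
      have hT2pos : (0:ℝ) < T^2 := by positivity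
      have hT2 : (1/T)^2 ≤ 2/T^2 := by
        rw [div_pow, one_pow]
        exact (div_le_div_iff_of_pos_right hT2pos).mpr (by norm_num)
      have h5 : ρ * (2/T) = 2/T - 2/T^2 := by rw [hρdef]; ring
      have h6 : ∑ i, p i * ((A *ᵥ y0) i)^2 ≤ 2/T^2 := le_trans h3 hT2
      linarith
    have hlog : ∀ s : ℕ, c (s+1)^2 ≤ c s * c (s+2) := by
      intro s
      rcases Nat.even_or_odd s with ⟨a, ha⟩ | ⟨a, ha⟩
      · have h := psd_cs hApsd (sym_dot hAt) (M^a *ᵥ y0) (M^(a+1) *ᵥ y0)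
        rw [key a (a+1), key a a, key (a+1) (a+1)] at h
        have e1 : a + (a+1) = s + 1 := by omega
        have e2 : a + a = s := by omega
        have e3 : (a+1) + (a+1) = s + 2 := by omega
        rw [e1, e2, e3] at h
        exact h
      · have h := psd_cs hBpsd (sym_dot hBt) (M^a *ᵥ y0) (M^(a+1) *ᵥ y0)
        rw [keyB a (a+1), keyB a a, keyB (a+1) (a+1)] at h
        have e1 : a + (a+1) + 1 = s + 1 := by omega
        have e2 : a + a + 1 = s := by omega
        have e3 : (a+1) + (a+1) + 1 = s + 2 := by omega
        rw [e1, e2, e3] at h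
        exact h
    have hchain : ∀ s : ℕ, 0 < c s ∧ ρ * c s ≤ c (s+1) := by
      intro s
      induction s with
      | zero =>
          constructor
          · rw [hc0]; positivity
          · exact hc1
      | succ s ih =>
          obtain ⟨h0, h1⟩ := ih
          have hcs1 : 0 < c (s+1) := lt_of_lt_of_le (mul_pos hρ0 h0) h1
          refine ⟨hcs1, ?_⟩
          have hl := hlog s
          nlinarith [mul_le_mul_of_nonneg_right h1 hcs1.le]
    have hgeom : ∀ k : ℕ, ρ^k * c 0 ≤ c k := by
      intro k
      induction k with
      | zero => simp
      | succ k ih =>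
          calc ρ^(k+1) * c 0 = ρ * (ρ^k * c 0) := by ring
            _ ≤ ρ * c k := mul_le_mul_of_nonneg_left ih hρ0.le
            _ ≤ c (k+1) := (hchain k).2
    -- final assembly
    have hw : ∀ σ : Fin t → Fin n, 0 ≤ ∏ j, p (σ j) :=
      fun σ => Finset.prod_nonneg (fun j _ => (hp (σ j)).le)
    have hw1 : ∑ σ : Fin t → Fin n, ∏ j, p (σ j) = 1 := sum_prod_probs p hp1 t
    have hJ := jensen hApsd hAt (fun σ : Fin t → Fin n => ∏ j, p (σ j)) hw hw1
      (fun σ => rcdIter A 0 y0 σ)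
    have hE := expect_iter A (fun i => myA_diag T i) p hp1 t y0
    rw [hE] at hJ
    have hk := key t t
    have hfin : ρ^(2*t) * c 0 ≤ c (t+t) := by
      have := hgeom (t+t)
      rw [two_mul]
      exact this
    calc (1 - 1/T)^(2*t) * (y0 ⬝ᵥ A *ᵥ y0)
        = ρ^(2*t) * c 0 := by rw [hρdef, hc0, hq0]
      _ ≤ c (t+t) := hfin
      _ = (M^t *ᵥ y0) ⬝ᵥ A *ᵥ (M^t *ᵥ y0) := hk.symm
      _ ≤ ∑ σ : Fin t → Fin n, (∏ j, p (σ j)) * (rcdIter A 0 y0 σ ⬝ᵥ A *ᵥ rcdIter A 0 y0 σ) := hJ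
end

section
/- Let 0 < λ_1 ≤ … ≤ λ_n be the eigenvalues of A with corresponding orthonormal eigenvectors u_1, …, u_n, and fix k ∈ {0,1,…,n−1}. For α > 0 and β_1, …, β_k ≥ 0 define C := α·Tr(A) + Σ_{i=1}^k β_i and M(α,β) := (1/C)·(α·A + Σ_{i=1}^k β_i u_i u_iᵀ). Then for all such (α,β), λ_min(M(α,β)) ≤ λ_{k+1}/C_k where C_k := (k+1)λ_{k+1} + Σ_{i=k+2}^n λ_i, and for the choice α = 1, β_i = λ_{k+1} − λ_i (i = 1,…,k) this bound is attained: λ_min(M(1, (λ_{k+1}−λ_i)_i)) = λ_{k+1}/C_k. -/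
open Matrix BigOperators Finset

/-- The matrix `M(α,β) = (1/C)(α A + Σ_{i<k} β_i u_i u_iᵀ)` with
`C = α Tr(A) + Σ_{i<k} β_i` (indices `0,…,k-1` are the `k` smallest). -/
noncomputable def Mssc {n : ℕ} (A : Matrix (Fin n) (Fin n) ℝ) (u : Fin n → Fin n → ℝ)
    (k : ℕ) (α : ℝ) (β : Fin n → ℝ) : Matrix (Fin n) (Fin n) ℝ :=
  (α * A.trace + ∑ i : Fin n, if (i : ℕ) < k then β i else 0)⁻¹ •
    (α • A + ∑ i : Fin n, if (i : ℕ) < k then β i • vecMulVec (u i) (u i) else 0)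

/-- `C_k = (k+1) λ_{k+1} + Σ_{i=k+2}^n λ_i` (0-indexed: `λ_{k+1}` is `lam ⟨k, _⟩`). -/
noncomputable def Cssc {n : ℕ} (lam : Fin n → ℝ) (k : ℕ) (hk : k < n) : ℝ :=
  ((k : ℝ) + 1) * lam ⟨k, hk⟩ + ∑ i : Fin n, if k + 1 ≤ (i : ℕ) then lam i else 0



section Rayleigh
variable {n : Type*} [Fintype n] [DecidableEq n]

lemma rayleigh_le {M : Matrix n n ℝ} (hM : M.IsHermitian)
    {c : ℝ} (hc : ∀ i, c ≤ hM.eigenvalues i) (x : n → ℝ) :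
    c * (x ⬝ᵥ x) ≤ x ⬝ᵥ (M *ᵥ x) := by
  set V : Matrix n n ℝ := (hM.eigenvectorUnitary : Matrix n n ℝ) with hV
  have hVs : V * star V = 1 := Matrix.mem_unitaryGroup_iff.mp hM.eigenvectorUnitary.2
  set y : n → ℝ := star V *ᵥ x with hy
  have key : ∀ z : n → ℝ, x ⬝ᵥ (V *ᵥ z) = y ⬝ᵥ z := by
    intro z
    rw [dotProduct_mulVec, hy]
    congr 1
    rw [Matrix.star_eq_conjTranspose, conjTranspose_eq_transpose_of_trivial, mulVec_transpose]
  have hVy : V *ᵥ y = x := by rw [hy, mulVec_mulVec, hVs, one_mulVec]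
  have hxx : x ⬝ᵥ x = y ⬝ᵥ y := by
    have h := key y
    rwa [hVy] at h
  have hMx : x ⬝ᵥ (M *ᵥ x) = ∑ i, hM.eigenvalues i * (y i)^2 := by
    conv_lhs => rw [hM.spectral_theorem, Unitary.conjStarAlgAut_apply, ← hV, ← mulVec_mulVec, ← mulVec_mulVec, ← hy, key]
    simp [dotProduct, mulVec_diagonal]
    apply Finset.sum_congr rfl
    intro i _
    ring
  rw [hMx, hxx]
  rw [dotProduct, Finset.mul_sum]
  apply Finset.sum_le_sum
  intro i _
  have := mul_le_mul_of_nonneg_right (hc i) (sq_nonneg (y i))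
  calc c * (y i * y i) = c * (y i)^2 := by ring
    _ ≤ hM.eigenvalues i * (y i)^2 := this

end Rayleigh


section R2
variable {n : Type*} [Fintype n] [DecidableEq n]

lemma eigenvalues_ge {M : Matrix n n ℝ} (hM : M.IsHermitian)
    {c : ℝ} (h : ∀ x : n → ℝ, c * (x ⬝ᵥ x) ≤ x ⬝ᵥ (M *ᵥ x)) (j : n) :
    c ≤ hM.eigenvalues j := by
  set v : n → ℝ := ⇑(hM.eigenvectorBasis j) with hv
  have hvv : v ⬝ᵥ v = 1 := by
    have h1 := orthonormal_iff_ite.mp hM.eigenvectorBasis.orthonormal j j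
    simp only [if_true, eq_self_iff_true] at h1
    rw [← h1]
    simp [PiLp.inner_apply, dotProduct, hv, RCLike.inner_apply, conj_trivial]
    rw [← h1, PiLp.inner_apply]
    simp [sq]
  have h2 : v ⬝ᵥ (M *ᵥ v) = hM.eigenvalues j := by
    rw [hv, hM.mulVec_eigenvectorBasis, dotProduct_smul, ← hv, smul_eq_mul, hvv, mul_one]
  have h3 := h v
  rw [h2, hvv, mul_one] at h3
  exact h3
end R2


section Dom
variable {n k : ℕ} {A : Matrix (Fin n) (Fin n) ℝ} {lam : Fin n → ℝ} {u : Fin n → Fin n → ℝ}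

lemma aux_gram (horth : ∀ i j, u i ⬝ᵥ u j = if i = j then (1 : ℝ) else 0) :
    ∑ i : Fin n, vecMulVec (u i) (u i) = 1 := by
  set U : Matrix (Fin n) (Fin n) ℝ := Matrix.of u with hU
  have h1 : U * Uᵀ = 1 := by
    ext i j
    simpa [Matrix.mul_apply, Matrix.one_apply, dotProduct, hU] using horth i j
  have h2 : Uᵀ * U = 1 := mul_eq_one_comm.mp h1
  rw [← h2]
  ext a b
  simp [Matrix.mul_apply, vecMulVec_apply, Matrix.sum_apply, hU]

lemma aux_A_eq (horth : ∀ i j, u i ⬝ᵥ u j = if i = j then (1 : ℝ) else 0)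
    (heig : ∀ i, A *ᵥ u i = lam i • u i) :
    A = ∑ i : Fin n, lam i • vecMulVec (u i) (u i) := by
  have h1 : A = A * ∑ i : Fin n, vecMulVec (u i) (u i) := by rw [aux_gram horth, mul_one]
  rw [h1, Finset.mul_sum]
  apply Finset.sum_congr rfl
  intro i _
  ext a b
  have := congrFun (heig i) a
  simp only [mulVec, Pi.smul_apply, smul_eq_mul] at this
  simp only [Matrix.mul_apply, vecMulVec_apply, Matrix.smul_apply, smul_eq_mul]
  calc ∑ l, A a l * (u i l * u i b) = (∑ l, A a l * u i l) * u i b := by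
        rw [Finset.sum_mul]; exact Finset.sum_congr rfl fun l _ => by ring
    _ = lam i * (u i a * u i b) := by rw [show ∑ l, A a l * u i l = lam i * u i a from this]; ring

lemma aux_trace (horth : ∀ i j, u i ⬝ᵥ u j = if i = j then (1 : ℝ) else 0)
    (heig : ∀ i, A *ᵥ u i = lam i • u i) :
    A.trace = ∑ i : Fin n, lam i := by
  rw [aux_A_eq horth heig]
  rw [trace_sum]
  apply Finset.sum_congr rfl
  intro i _
  rw [trace_smul]
  have : (vecMulVec (u i) (u i)).trace = u i ⬝ᵥ u i := by
    simp [Matrix.trace, Matrix.diag, vecMulVec_apply, dotProduct]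
  rw [this, horth i i, if_pos rfl, smul_eq_mul, mul_one]

lemma aux_Mssc (horth : ∀ i j, u i ⬝ᵥ u j = if i = j then (1 : ℝ) else 0)
    (heig : ∀ i, A *ᵥ u i = lam i • u i) (k : ℕ) (α : ℝ) (β : Fin n → ℝ) :
    Mssc A u k α β = (∑ i : Fin n, (α * lam i + if (i : ℕ) < k then β i else 0))⁻¹ •
      ∑ i : Fin n, (α * lam i + if (i : ℕ) < k then β i else 0) • vecMulVec (u i) (u i) := by
  have hC : α * A.trace + (∑ i : Fin n, if (i : ℕ) < k then β i else 0)
      = ∑ i : Fin n, (α * lam i + if (i : ℕ) < k then β i else 0) := by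
    rw [aux_trace horth heig, Finset.mul_sum, ← Finset.sum_add_distrib]
  unfold Mssc
  rw [hC]
  congr 1
  rw [aux_A_eq horth heig, Finset.smul_sum, ← Finset.sum_add_distrib]
  apply Finset.sum_congr rfl
  intro i _
  rw [add_smul, smul_smul]
  congr 1
  split
  · rfl
  · rw [zero_smul]

lemma aux_qf_general (w : Fin n → ℝ) (x : Fin n → ℝ) :
    x ⬝ᵥ ((∑ i : Fin n, w i • vecMulVec (u i) (u i)) *ᵥ x)
      = ∑ i : Fin n, w i * (u i ⬝ᵥ x)^2 := by
  have hsum : (∑ i : Fin n, w i • vecMulVec (u i) (u i)) *ᵥ x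
      = ∑ i : Fin n, (w i • vecMulVec (u i) (u i)) *ᵥ x := by
    funext a
    simp only [mulVec, dotProduct, Matrix.sum_apply, Finset.sum_apply, Finset.sum_mul]
    exact Finset.sum_comm
  rw [hsum]
  have hd : x ⬝ᵥ (∑ i : Fin n, (w i • vecMulVec (u i) (u i)) *ᵥ x)
      = ∑ i : Fin n, x ⬝ᵥ ((w i • vecMulVec (u i) (u i)) *ᵥ x) := by
    simp only [dotProduct, Finset.sum_apply, Finset.mul_sum]
    exact Finset.sum_comm
  rw [hd]
  apply Finset.sum_congr rfl
  intro i _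
  rw [smul_mulVec, dotProduct_smul, smul_eq_mul]
  congr 1
  have : vecMulVec (u i) (u i) *ᵥ x = (u i ⬝ᵥ x) • u i := by
    funext a
    simp [mulVec, vecMulVec_apply, dotProduct, Finset.mul_sum, Finset.sum_mul]
    apply Finset.sum_congr rfl
    intro l _
    ring
  rw [this, dotProduct_smul, smul_eq_mul, dotProduct_comm x (u i), sq]

lemma aux_parseval (horth : ∀ i j, u i ⬝ᵥ u j = if i = j then (1 : ℝ) else 0)
    (x : Fin n → ℝ) : x ⬝ᵥ x = ∑ i : Fin n, (u i ⬝ᵥ x)^2 := by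
  have h := aux_qf_general (u := u) (fun _ => (1:ℝ)) x
  simp only [one_smul, one_mul] at h
  rw [← h, aux_gram horth, one_mulVec]

lemma aux_qf_at (horth : ∀ i j, u i ⬝ᵥ u j = if i = j then (1 : ℝ) else 0)
    (w : Fin n → ℝ) (j : Fin n) :
    u j ⬝ᵥ ((∑ i : Fin n, w i • vecMulVec (u i) (u i)) *ᵥ u j) = w j := by
  rw [aux_qf_general]
  have : ∀ i : Fin n, w i * (u i ⬝ᵥ u j)^2 = if i = j then w j else 0 := by
    intro i
    rw [horth i j]
    split
    · subst ‹i = j›; simp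
    · simp
  rw [Finset.sum_congr rfl (fun i _ => this i), Finset.sum_ite_eq' Finset.univ j (fun _ => w j)]
  simp

lemma aux_sum_ite (hk : k < n) :
    ∑ j : Fin n, (if (j : ℕ) < k then lam ⟨k, hk⟩ else lam j) = Cssc lam k hk := by
  have hpt : ∀ j : Fin n, (if (j : ℕ) < k then lam ⟨k, hk⟩ else lam j)
      = (if (j : ℕ) < k then lam ⟨k, hk⟩ else 0) + ((if j = ⟨k, hk⟩ then lam j else 0)
        + (if k + 1 ≤ (j : ℕ) then lam j else 0)) := by
    intro j
    rcases lt_trichotomy (j : ℕ) k with h | h | h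
    · rw [if_pos h, if_pos h, if_neg (by simp [Fin.ext_iff]; omega), if_neg (by omega)]
      ring
    · rw [if_neg (by omega), if_neg (by omega), if_pos (by simp [Fin.ext_iff, h]),
        if_neg (by omega)]
      ring
    · rw [if_neg (by omega), if_neg (by omega), if_neg (by simp [Fin.ext_iff]; omega),
        if_pos (by omega)]
      ring
  rw [Finset.sum_congr rfl (fun j _ => hpt j), Finset.sum_add_distrib, Finset.sum_add_distrib]
  have h1 : ∑ j : Fin n, (if (j : ℕ) < k then lam ⟨k, hk⟩ else 0) = (k : ℝ) * lam ⟨k, hk⟩ := by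
    rw [← Finset.sum_filter]
    simp only [Finset.sum_const, nsmul_eq_mul]
    congr 1
    norm_cast
    have h : (Finset.univ.filter fun j : Fin n => (j : ℕ) < k) = Finset.Iio ⟨k, hk⟩ := by
      ext j
      simp [Fin.lt_def]
    rw [h, Fin.card_Iio]
  have h2 : ∑ j : Fin n, (if j = ⟨k, hk⟩ then lam j else 0) = lam ⟨k, hk⟩ := by
    rw [Finset.sum_ite_eq' Finset.univ (⟨k, hk⟩ : Fin n) lam]
    simp
  rw [h1, h2]
  unfold Cssc
  ring
end Dom

theorem stmt10 {n : ℕ} (A : Matrix (Fin n) (Fin n) ℝ) (hA : A.PosDef)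
    (lam : Fin n → ℝ) (u : Fin n → Fin n → ℝ)
    (hpos : ∀ i, 0 < lam i) (hmono : Monotone lam)
    (horth : ∀ i j, u i ⬝ᵥ u j = if i = j then (1 : ℝ) else 0)
    (heig : ∀ i, A *ᵥ u i = lam i • u i)
    (k : ℕ) (hk : k < n) :
    (∀ α : ℝ, 0 < α → ∀ β : Fin n → ℝ, (∀ i : Fin n, (i : ℕ) < k → 0 ≤ β i) →
      ∀ hM : (Mssc A u k α β).IsHermitian,
        (⨅ i, hM.eigenvalues i) ≤ lam ⟨k, hk⟩ / Cssc lam k hk) ∧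
    (∀ hM : (Mssc A u k 1 (fun i => lam ⟨k, hk⟩ - lam i)).IsHermitian,
      (⨅ i, hM.eigenvalues i) = lam ⟨k, hk⟩ / Cssc lam k hk) := by
  haveI : Nonempty (Fin n) := ⟨⟨k, hk⟩⟩
  have hCkpos : 0 < Cssc lam k hk := by
    unfold Cssc
    apply add_pos_of_pos_of_nonneg
    · apply mul_pos _ (hpos _)
      positivity
    · apply Finset.sum_nonneg
      intro i _
      split
      · exact (hpos i).le
      · exact le_refl 0
  have hCkne : Cssc lam k hk ≠ 0 := ne_of_gt hCkpos
  -- Part 1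
  have part1 : ∀ α : ℝ, 0 < α → ∀ β : Fin n → ℝ, (∀ i : Fin n, (i : ℕ) < k → 0 ≤ β i) →
      ∀ hM : (Mssc A u k α β).IsHermitian,
        (⨅ i, hM.eigenvalues i) ≤ lam ⟨k, hk⟩ / Cssc lam k hk := by
    intro α hα β hβ hM
    have hμpos : ∀ i : Fin n,
        0 < α * lam i + if (i : ℕ) < k then β i else 0 := by
      intro i
      apply add_pos_of_pos_of_nonneg (mul_pos hα (hpos i))
      split
      · exact hβ i ‹_›
      · exact le_refl 0
    have hCpos : 0 < ∑ i : Fin n, (α * lam i + if (i : ℕ) < k then β i else 0) :=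
      Finset.sum_pos (fun i _ => hμpos i) Finset.univ_nonempty
    have hMr := aux_Mssc horth heig k α β
    have key : ∀ j : Fin n, (⨅ i, hM.eigenvalues i) ≤
        (∑ i : Fin n, (α * lam i + if (i : ℕ) < k then β i else 0))⁻¹ *
          (α * lam j + if (j : ℕ) < k then β j else 0) := by
      intro j
      have hc : ∀ i, (⨅ i, hM.eigenvalues i) ≤ hM.eigenvalues i := fun i =>
        ciInf_le (Finite.bddBelow_range _) i
      have h1 := rayleigh_le hM hc (u j)
      rw [horth j j, if_pos rfl, mul_one] at h1
      have h2 : u j ⬝ᵥ (Mssc A u k α β *ᵥ u j) =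
          (∑ i : Fin n, (α * lam i + if (i : ℕ) < k then β i else 0))⁻¹ *
            (α * lam j + if (j : ℕ) < k then β j else 0) := by
        rw [hMr, smul_mulVec, dotProduct_smul, smul_eq_mul,
          aux_qf_at horth (fun i => α * lam i + if (i : ℕ) < k then β i else 0) j]
      rw [h2] at h1
      exact h1
    by_contra hcon
    push_neg at hcon
    have hμgt : ∀ j : Fin n, lam ⟨k, hk⟩ / Cssc lam k hk *
        (∑ i : Fin n, (α * lam i + if (i : ℕ) < k then β i else 0)) <
        α * lam j + if (j : ℕ) < k then β j else 0 := by
      intro j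
      have h1 := lt_of_lt_of_le hcon (key j)
      rw [inv_mul_eq_div] at h1
      exact (lt_div_iff₀ hCpos).mp h1
    have hαgt : (∑ i : Fin n, (α * lam i + if (i : ℕ) < k then β i else 0)) /
        Cssc lam k hk < α := by
      have h1 := hμgt ⟨k, hk⟩
      rw [if_neg (by simp)] at h1
      have h3 : (∑ i : Fin n, (α * lam i + if (i : ℕ) < k then β i else 0)) /
          Cssc lam k hk * lam ⟨k, hk⟩ < α * lam ⟨k, hk⟩ := by
        calc _ = lam ⟨k, hk⟩ / Cssc lam k hk *
            (∑ i : Fin n, (α * lam i + if (i : ℕ) < k then β i else 0)) := by ring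
          _ < α * lam ⟨k, hk⟩ + 0 := by simpa using h1
          _ = α * lam ⟨k, hk⟩ := by ring
      exact (mul_lt_mul_iff_of_pos_right (hpos ⟨k, hk⟩)).mp h3
    have ht : ∀ j : Fin n,
        (∑ i : Fin n, (α * lam i + if (i : ℕ) < k then β i else 0)) / Cssc lam k hk *
          (if (j : ℕ) < k then lam ⟨k, hk⟩ else lam j) <
        α * lam j + if (j : ℕ) < k then β j else 0 := by
      intro j
      by_cases hj : (j : ℕ) < k
      · rw [if_pos hj]
        calc _ = lam ⟨k, hk⟩ / Cssc lam k hk *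
            (∑ i : Fin n, (α * lam i + if (i : ℕ) < k then β i else 0)) := by ring
          _ < _ := hμgt j
      · rw [if_neg hj, if_neg hj, add_zero]
        exact (mul_lt_mul_iff_of_pos_right (hpos j)).mpr hαgt
    have hsum := Finset.sum_lt_sum_of_nonempty Finset.univ_nonempty (fun j _ => ht j)
    rw [← Finset.mul_sum, aux_sum_ite hk, div_mul_cancel₀ _ hCkne] at hsum
    exact lt_irrefl _ hsum
  refine ⟨part1, ?_⟩
  -- Part 2
  intro hM
  have hβ2 : ∀ i : Fin n, (i : ℕ) < k → 0 ≤ lam ⟨k, hk⟩ - lam i := by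
    intro i hi
    have : i ≤ ⟨k, hk⟩ := by
      rw [Fin.le_def]
      exact le_of_lt hi
    linarith [hmono this]
  apply le_antisymm (part1 1 one_pos _ hβ2 hM)
  -- lower bound
  have hμeq : ∀ i : Fin n, (1 * lam i + if (i : ℕ) < k then lam ⟨k, hk⟩ - lam i else 0)
      = if (i : ℕ) < k then lam ⟨k, hk⟩ else lam i := by
    intro i
    split
    · ring
    · ring
  have hCeq : (∑ i : Fin n, (1 * lam i + if (i : ℕ) < k then lam ⟨k, hk⟩ - lam i else 0))
      = Cssc lam k hk := by
    rw [Finset.sum_congr rfl (fun i _ => hμeq i), aux_sum_ite hk]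
  have hMr := aux_Mssc horth heig k 1 (fun i => lam ⟨k, hk⟩ - lam i)
  simp only [hCeq, hμeq] at hMr
  have hlow : ∀ x : Fin n → ℝ,
      lam ⟨k, hk⟩ / Cssc lam k hk * (x ⬝ᵥ x) ≤ x ⬝ᵥ (Mssc A u k 1
        (fun i => lam ⟨k, hk⟩ - lam i) *ᵥ x) := by
    intro x
    have hstep : lam ⟨k, hk⟩ / Cssc lam k hk * (x ⬝ᵥ x)
        = (Cssc lam k hk)⁻¹ * ∑ i : Fin n, lam ⟨k, hk⟩ * (u i ⬝ᵥ x) ^ 2 := by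
      rw [aux_parseval horth x, Finset.mul_sum, Finset.mul_sum]
      apply Finset.sum_congr rfl
      intro i _
      ring
    rw [hstep, hMr, smul_mulVec, dotProduct_smul, smul_eq_mul,
      aux_qf_general (fun i => if (i : ℕ) < k then lam ⟨k, hk⟩ else lam i) x,
      aux_sum_ite hk]
    apply mul_le_mul_of_nonneg_left _ (inv_nonneg.mpr hCkpos.le)
    apply Finset.sum_le_sum
    intro i _
    apply mul_le_mul_of_nonneg_right _ (sq_nonneg _)
    split
    · exact le_refl _
    · next hin =>
      apply hmono
      simp only [Fin.le_def]
      omega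
  apply le_ciInf
  intro j
  exact eigenvalues_ge hM hlow j
end

section
/- Let 0 < λ_1 ≤ λ_2 ≤ … ≤ λ_n be real numbers and for k ∈ {0,1,…,n−1} set C_k := (k+1)λ_{k+1} + Σ_{i=k+2}^n λ_i. Then the sequence k ↦ λ_{k+1}/C_k is nondecreasing; moreover λ_1/C_0 = λ_1/(Σ_{i=1}^n λ_i) and λ_n/C_{n−1} = 1/n, so λ_1/(Σ_i λ_i) = λ_1/C_0 ≤ λ_2/C_1 ≤ … ≤ λ_n/C_{n−1} = 1/n. -/
open BigOperators Finset

lemma tail_nonneg {n : ℕ} (lam : Fin n → ℝ) (hpos : ∀ i, 0 < lam i) (m : ℕ) :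
    0 ≤ ∑ i : Fin n, if m ≤ (i : ℕ) then lam i else 0 := by
  apply Finset.sum_nonneg
  intro i _
  split
  · exact (hpos i).le
  · exact le_rfl

lemma Cssc_pos {n : ℕ} (lam : Fin n → ℝ) (hpos : ∀ i, 0 < lam i) (k : ℕ) (hk : k < n) :
    0 < Cssc lam k hk := by
  unfold Cssc
  have h1 : 0 < ((k : ℝ) + 1) * lam ⟨k, hk⟩ :=
    mul_pos (by positivity) (hpos _)
  have h2 := tail_nonneg lam hpos (k + 1)
  linarith

lemma sum_split {n : ℕ} (lam : Fin n → ℝ) (k : ℕ) (hk1 : k + 1 < n) :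
    (∑ i : Fin n, if k + 1 ≤ (i : ℕ) then lam i else 0) =
    lam ⟨k + 1, hk1⟩ + ∑ i : Fin n, if k + 2 ≤ (i : ℕ) then lam i else 0 := by
  have key : ∀ i : Fin n, (if k + 1 ≤ (i : ℕ) then lam i else 0) =
      (if i = ⟨k + 1, hk1⟩ then lam i else 0) + (if k + 2 ≤ (i : ℕ) then lam i else 0) := by
    intro i
    rcases eq_or_ne i ⟨k + 1, hk1⟩ with h | h
    · subst h; simp
    · have hne : (i : ℕ) ≠ k + 1 := fun hc => h (Fin.ext hc)
      rcases lt_or_ge (i : ℕ) (k + 1) with hlt | hge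
      · rw [if_neg (by omega), if_neg h, if_neg (by omega)]; ring
      · rw [if_pos (by omega), if_neg h, if_pos (by omega)]; ring
  rw [Finset.sum_congr rfl (fun i _ => key i), Finset.sum_add_distrib,
    Finset.sum_ite_eq' Finset.univ (⟨k + 1, hk1⟩ : Fin n) lam]
  simp

lemma step {n : ℕ} (lam : Fin n → ℝ) (hpos : ∀ i, 0 < lam i) (hmono : Monotone lam)
    (k : ℕ) (hk1 : k + 1 < n) :
    lam ⟨k, Nat.lt_of_succ_lt hk1⟩ / Cssc lam k (Nat.lt_of_succ_lt hk1) ≤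
    lam ⟨k + 1, hk1⟩ / Cssc lam (k + 1) hk1 := by
  have hk : k < n := Nat.lt_of_succ_lt hk1
  set a := lam ⟨k, hk⟩ with ha
  set b := lam ⟨k + 1, hk1⟩ with hb
  set S := ∑ i : Fin n, if k + 2 ≤ (i : ℕ) then lam i else 0 with hS
  have hab : a ≤ b := hmono (by simp [Fin.mk_le_mk])
  have hapos : 0 < a := hpos _
  have hbpos : 0 < b := hpos _
  have hSpos : 0 ≤ S := tail_nonneg lam hpos (k + 2)
  have hCk : Cssc lam k hk = ((k : ℝ) + 1) * a + b + S := by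
    unfold Cssc
    rw [sum_split lam k hk1]
    ring
  have hCk1 : Cssc lam (k + 1) hk1 = ((k : ℝ) + 2) * b + S := by
    unfold Cssc
    simp only [show k + 1 + 1 = k + 2 from rfl]
    push_cast
    ring
  rw [hCk, hCk1, div_le_div_iff₀ (by nlinarith) (by nlinarith)]
  nlinarith [mul_nonneg (sub_nonneg.mpr hab) hSpos, mul_pos hbpos hbpos]

theorem stmt11 {n : ℕ} (hn : 0 < n) (lam : Fin n → ℝ)
    (hpos : ∀ i, 0 < lam i) (hmono : Monotone lam) :
    (∀ (k l : ℕ) (hk : k < n) (hl : l < n), k ≤ l →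
      lam ⟨k, hk⟩ / Cssc lam k hk ≤ lam ⟨l, hl⟩ / Cssc lam l hl) ∧
    lam ⟨0, hn⟩ / Cssc lam 0 hn = lam ⟨0, hn⟩ / (∑ i, lam i) ∧
    lam ⟨n - 1, Nat.sub_lt hn one_pos⟩ / Cssc lam (n - 1) (Nat.sub_lt hn one_pos) =
      1 / (n : ℝ) := by
  refine ⟨?_, ?_, ?_⟩
  · intro k l hk hl hkl
    induction l, hkl using Nat.le_induction with
    | base => exact le_rfl
    | succ m hm ih =>
      have hm' : m < n := Nat.lt_of_succ_lt hl
      exact le_trans (ih hm') (step lam hpos hmono m hl)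
  · have hC0 : Cssc lam 0 hn = ∑ i, lam i := by
      unfold Cssc
      have key : ∀ i : Fin n, lam i =
          (if i = ⟨0, hn⟩ then lam i else 0) + (if 0 + 1 ≤ (i : ℕ) then lam i else 0) := by
        intro i
        rcases eq_or_ne i ⟨0, hn⟩ with h | h
        · subst h; simp
        · have hne : (i : ℕ) ≠ 0 := fun hc => h (Fin.ext hc)
          rw [if_neg h, if_pos (by omega)]; ring
      rw [Finset.sum_congr rfl (fun i _ => key i), Finset.sum_add_distrib,
        Finset.sum_ite_eq' Finset.univ (⟨0, hn⟩ : Fin n) lam]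
      simp
    rw [hC0]
  · have hzero : (∑ i : Fin n, if (n - 1) + 1 ≤ (i : ℕ) then lam i else 0) = 0 := by
      apply Finset.sum_eq_zero
      intro i _
      rw [if_neg (by omega)]
    have hC : Cssc lam (n - 1) (Nat.sub_lt hn one_pos) =
        (n : ℝ) * lam ⟨n - 1, Nat.sub_lt hn one_pos⟩ := by
      unfold Cssc
      rw [hzero]
      have : ((n - 1 : ℕ) : ℝ) = (n : ℝ) - 1 := by
        have : 1 ≤ n := hn
        push_cast [this]
        ring
      rw [this]
      ring
    rw [hC]
    have hl := hpos ⟨n - 1, Nat.sub_lt hn one_pos⟩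
    have hn' : (0 : ℝ) < n := by exact_mod_cast hn
    field_simp
end

section
/- Let 0 < λ_1 ≤ λ_2 ≤ … ≤ λ_n be real numbers, τ ≥ 1, and for k ∈ {0,1,…,n−1} set F_k := (1/τ)·((k+1)λ_{k+1} + Σ_{i=k+2}^n λ_i) + (1 − 1/τ)·λ_n. Then the sequence k ↦ λ_{k+1}/F_k is nondecreasing; moreover λ_1/F_0 = λ_1/((1/τ)Σ_{i=1}^n λ_i + (1 − 1/τ)λ_n) and λ_n/F_{n−1} = 1/((n−1)/τ + 1). -/
open BigOperators Finset

/-- `F_k = (1/τ)((k+1) λ_{k+1} + Σ_{i=k+2}^n λ_i) + (1 - 1/τ) λ_n`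
(0-indexed: `λ_{k+1}` is `lam ⟨k, _⟩`). -/
noncomputable def Fssc {n : ℕ} (lam : Fin n → ℝ) (τ : ℕ) (k : ℕ) (hk : k < n) : ℝ :=
  (τ : ℝ)⁻¹ * (((k : ℝ) + 1) * lam ⟨k, hk⟩ +
      ∑ i : Fin n, if k + 1 ≤ (i : ℕ) then lam i else 0) +
    (1 - (τ : ℝ)⁻¹) * lam ⟨n - 1, by omega⟩

lemma sssc_split {n : ℕ} (lam : Fin n → ℝ) (m : ℕ) (hm : m < n) :
    ∑ i : Fin n, (if m ≤ (i : ℕ) then lam i else 0)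
      = lam ⟨m, hm⟩ + ∑ i : Fin n, (if m + 1 ≤ (i : ℕ) then lam i else 0) := by
  have key : ∀ i : Fin n, (if m ≤ (i : ℕ) then lam i else 0)
      = (if i = (⟨m, hm⟩ : Fin n) then lam i else 0)
        + (if m + 1 ≤ (i : ℕ) then lam i else 0) := by
    intro i
    have he : (i = (⟨m, hm⟩ : Fin n)) ↔ (i : ℕ) = m := by
      simp [Fin.ext_iff]
    rw [if_congr he rfl rfl]
    split_ifs <;> first | (exfalso; omega) | ring
  rw [Finset.sum_congr rfl fun i _ => key i, Finset.sum_add_distrib,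
    Finset.sum_ite_eq' Finset.univ]
  simp

lemma sssc_nonneg {n : ℕ} (lam : Fin n → ℝ) (hpos : ∀ i, 0 < lam i) (m : ℕ) :
    0 ≤ ∑ i : Fin n, (if m ≤ (i : ℕ) then lam i else 0) :=
  Finset.sum_nonneg fun i _ => by split_ifs <;> simp [le_of_lt (hpos i)]

lemma Fssc_pos {n : ℕ} (lam : Fin n → ℝ) (hpos : ∀ i, 0 < lam i) (τ : ℕ)
    (hτ : 1 ≤ τ) (k : ℕ) (hk : k < n) : 0 < Fssc lam τ k hk := by
  have hτ1 : (1 : ℝ) ≤ (τ : ℝ) := by exact_mod_cast hτ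
  have ht : (0 : ℝ) < (τ : ℝ)⁻¹ := inv_pos.2 (by linarith)
  have ht1 : (τ : ℝ)⁻¹ ≤ 1 := inv_le_one_of_one_le₀ hτ1
  have hS := sssc_nonneg lam hpos (k + 1)
  have ha := hpos ⟨k, hk⟩
  have hL := hpos ⟨n - 1, by omega⟩
  unfold Fssc
  have hk0 : (0 : ℝ) ≤ (k : ℝ) := Nat.cast_nonneg k
  nlinarith [mul_pos ht (show (0:ℝ) < ((k:ℝ)+1) * lam ⟨k, hk⟩ +
      ∑ i : Fin n, (if k + 1 ≤ (i : ℕ) then lam i else 0) by nlinarith),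
    mul_nonneg (by linarith : (0:ℝ) ≤ 1 - (τ:ℝ)⁻¹) hL.le]

lemma Fssc_step {n : ℕ} (lam : Fin n → ℝ) (hpos : ∀ i, 0 < lam i)
    (hmono : Monotone lam) (τ : ℕ) (hτ : 1 ≤ τ) (k : ℕ) (hk1 : k + 1 < n) :
    lam ⟨k, by omega⟩ / Fssc lam τ k (by omega)
      ≤ lam ⟨k + 1, hk1⟩ / Fssc lam τ (k + 1) hk1 := by
  have hk : k < n := by omega
  have hF1 := Fssc_pos lam hpos τ hτ k hk
  have hF2 := Fssc_pos lam hpos τ hτ (k + 1) hk1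
  rw [div_le_div_iff₀ hF1 hF2]
  have hτ1 : (1 : ℝ) ≤ (τ : ℝ) := by exact_mod_cast hτ
  have ht : (0 : ℝ) < (τ : ℝ)⁻¹ := inv_pos.2 (by linarith)
  have ht1 : (τ : ℝ)⁻¹ ≤ 1 := inv_le_one_of_one_le₀ hτ1
  unfold Fssc
  rw [sssc_split lam (k + 1) hk1]
  push_cast
  set a := lam ⟨k, hk⟩ with ha
  set b := lam ⟨k + 1, hk1⟩ with hb
  set L := lam ⟨n - 1, by omega⟩ with hLdef
  set S := ∑ i : Fin n, (if k + 1 + 1 ≤ (i : ℕ) then lam i else 0) with hSdef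
  have hab : a ≤ b := hmono (by simp [Fin.le_def])
  have ha0 : 0 < a := hpos _
  have hL : 0 < L := hpos _
  have hS : 0 ≤ S := sssc_nonneg lam hpos (k + 1 + 1)
  nlinarith [mul_nonneg ht.le (mul_nonneg (sub_nonneg.2 hab) (ha0.trans_le hab).le),
    mul_nonneg ht.le (mul_nonneg (sub_nonneg.2 hab) hS),
    mul_nonneg (by linarith : (0:ℝ) ≤ 1 - (τ:ℝ)⁻¹)
      (mul_nonneg (sub_nonneg.2 hab) hL.le)]

theorem stmt14 {n : ℕ} (hn : 0 < n) (lam : Fin n → ℝ)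
    (hpos : ∀ i, 0 < lam i) (hmono : Monotone lam) (τ : ℕ) (hτ : 1 ≤ τ) :
    (∀ (k l : ℕ) (hk : k < n) (hl : l < n), k ≤ l →
      lam ⟨k, hk⟩ / Fssc lam τ k hk ≤ lam ⟨l, hl⟩ / Fssc lam τ l hl) ∧
    lam ⟨0, hn⟩ / Fssc lam τ 0 hn =
      lam ⟨0, hn⟩ / ((τ : ℝ)⁻¹ * (∑ i, lam i) +
        (1 - (τ : ℝ)⁻¹) * lam ⟨n - 1, Nat.sub_lt hn one_pos⟩) ∧
    lam ⟨n - 1, Nat.sub_lt hn one_pos⟩ / Fssc lam τ (n - 1) (Nat.sub_lt hn one_pos) =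
      1 / (((n : ℝ) - 1) / (τ : ℝ) + 1) := by
  have hτ1 : (1 : ℝ) ≤ (τ : ℝ) := by exact_mod_cast hτ
  have ht : (0 : ℝ) < (τ : ℝ)⁻¹ := inv_pos.2 (by linarith)
  refine ⟨?_, ?_, ?_⟩
  · intro k l
    induction l with
    | zero =>
      intro hk hl hkl
      have : k = 0 := by omega
      subst this
      rfl
    | succ m ih =>
      intro hk hl hkl
      rcases Nat.lt_or_ge k (m + 1) with h | h
      · have hm : m < n := by omega
        exact le_trans (ih hk hm (by omega)) (Fssc_step lam hpos hmono τ hτ m hl)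
      · have : k = m + 1 := by omega
        subst this
        rfl
  · have h0 : Fssc lam τ 0 hn = (τ : ℝ)⁻¹ * (∑ i, lam i) +
        (1 - (τ : ℝ)⁻¹) * lam ⟨n - 1, Nat.sub_lt hn one_pos⟩ := by
      have h := sssc_split lam 0 hn
      simp only [Nat.zero_le, if_true] at h
      unfold Fssc
      rw [h]
      push_cast
      ring
    rw [h0]
  · have hL : 0 < lam ⟨n - 1, Nat.sub_lt hn one_pos⟩ := hpos _
    have hc : (0 : ℝ) < ((n : ℝ) - 1) / (τ : ℝ) + 1 := by
      have hn1 : (1 : ℝ) ≤ (n : ℝ) := by exact_mod_cast hn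
      have h2 : (0:ℝ) ≤ ((n : ℝ) - 1) / (τ : ℝ) := div_nonneg (by linarith) (by linarith)
      linarith
    have hF : Fssc lam τ (n - 1) (Nat.sub_lt hn one_pos)
        = lam ⟨n - 1, Nat.sub_lt hn one_pos⟩ * (((n : ℝ) - 1) / (τ : ℝ) + 1) := by
      unfold Fssc
      have hzero : ∑ i : Fin n, (if n - 1 + 1 ≤ (i : ℕ) then lam i else 0) = 0 := by
        apply Finset.sum_eq_zero
        intro i _
        have : (i : ℕ) < n := i.isLt
        rw [if_neg (by omega)]
      rw [hzero]
      have hcast : ((n - 1 : ℕ) : ℝ) = (n : ℝ) - 1 := by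
        have h1 : 1 ≤ n := hn
        push_cast [h1]
        ring
      rw [hcast]
      field_simp
      ring
    rw [hF, div_mul_cancel_left₀ hL.ne', one_div]
end

section
/- Let n ≥ 2, let v_1, …, v_n ∈ ℝⁿ satisfy v_iᵀ A v_i = 1 for all i and |v_iᵀ A v_j| ≤ ε for all i ≠ j, and suppose ε ≤ 1/(3(n−1)). Let S := [v_1, …, v_n] and W := (1/n)·A^{1/2} S Sᵀ A^{1/2}. Then λ_min(W) > 1/(3n). -/
open Matrix BigOperators Finset

/-- The square root `Matrix.PosSemidef.sqrt` of the older Mathlib, spelled out. -/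
noncomputable def posSemidefSqrtOld {n : Type*} [Fintype n] [DecidableEq n]
    {A : Matrix n n ℝ} (hA : A.PosSemidef) : Matrix n n ℝ :=
  (hA.1.eigenvectorUnitary : Matrix n n ℝ) * diagonal ((↑) ∘ (√·) ∘ hA.1.eigenvalues) *
    (star (hA.1.eigenvectorUnitary : Matrix n n ℝ))

lemma quad_bound {n : ℕ} (G : Matrix (Fin n) (Fin n) ℝ) (ε : ℝ)
    (hd : ∀ i, G i i = 1) (ho : ∀ i j, i ≠ j → |G i j| ≤ ε)
    (hε0 : 0 ≤ ε) (hεn : ε * ((n : ℝ) - 1) ≤ 1/3) (z : Fin n → ℝ) :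
    (2/3) * (z ⬝ᵥ z) ≤ z ⬝ᵥ (G *ᵥ z) := by
  have hPdef : z ⬝ᵥ z = ∑ i, z i ^ 2 := by
    simp [dotProduct, sq]
  set P : ℝ := ∑ i, z i ^ 2 with hP
  set T : ℝ := ∑ i, |z i| with hT
  have hP0 : 0 ≤ P := Finset.sum_nonneg fun i _ => sq_nonneg _
  have hTP : T ^ 2 ≤ (n : ℝ) * P := by
    have := sq_sum_le_card_mul_sum_sq (s := (univ : Finset (Fin n))) (f := fun i => |z i|)
    simpa [sq_abs, hT, hP] using this
  have expand : z ⬝ᵥ (G *ᵥ z) = ∑ i, ∑ j, z i * G i j * z j := by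
    simp [dotProduct, mulVec, Finset.mul_sum, mul_assoc]
  have step : ∀ i j : Fin n,
      (if i = j then z i ^ 2 else -(ε * (|z i| * |z j|))) ≤ z i * G i j * z j := by
    intro i j
    by_cases h : i = j
    · subst h; simp [hd i, sq]
    · simp only [if_neg h]
      have h1 : |z i * G i j * z j| ≤ ε * (|z i| * |z j|) := by
        rw [abs_mul, abs_mul]
        calc |z i| * |G i j| * |z j| ≤ |z i| * ε * |z j| := by
              have := ho i j h
              gcongr
          _ = ε * (|z i| * |z j|) := by ring
      linarith [neg_abs_le (z i * G i j * z j)]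
  have sum_le : ∑ i, ∑ j, (if i = j then z i ^ 2 else -(ε * (|z i| * |z j|)))
      ≤ z ⬝ᵥ (G *ᵥ z) := by
    rw [expand]
    exact Finset.sum_le_sum fun i _ => Finset.sum_le_sum fun j _ => step i j
  have ident : ∑ i, ∑ j, (if i = j then z i ^ 2 else -(ε * (|z i| * |z j|)))
      = -(ε * (T * T)) + (1 + ε) * P := by
    have h1 : ∀ i j : Fin n, (if i = j then z i ^ 2 else -(ε * (|z i| * |z j|)))
        = -(ε * (|z i| * |z j|)) + (if i = j then (1 + ε) * z i ^ 2 else 0) := by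
      intro i j
      by_cases h : i = j
      · subst h
        have habs : |z i| * |z i| = z i ^ 2 := by rw [← abs_mul, ← sq, abs_sq]
        simp [habs]; ring
      · simp [h]
    simp_rw [h1, Finset.sum_add_distrib, Finset.sum_ite_eq, mem_univ, if_true]
    have h2 : ∑ i, ∑ j : Fin n, -(ε * (|z i| * |z j|)) = -(ε * (T * T)) := by
      have hTT : T * T = ∑ i, ∑ j, |z i| * |z j| :=
        Finset.sum_mul_sum univ univ (fun i => |z i|) (fun j => |z j|)
      rw [hTT]
      simp [Finset.mul_sum]
    rw [h2, ← Finset.mul_sum]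
  rw [hPdef]
  have hεT : ε * (T * T) ≤ ε * ((n : ℝ) * P) := by
    have : T * T = T ^ 2 := (sq T).symm
    rw [this]; exact mul_le_mul_of_nonneg_left hTP hε0
  nlinarith [sum_le, ident, mul_nonneg (by linarith : (0:ℝ) ≤ 1/3 - ε * ((n:ℝ) - 1)) hP0]

theorem stmt18 {n : ℕ} (hn : 2 ≤ n) (A : Matrix (Fin n) (Fin n) ℝ) (hA : A.PosDef)
    (v : Fin n → Fin n → ℝ) (ε : ℝ)
    (hdiag : ∀ i, v i ⬝ᵥ A *ᵥ v i = 1)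
    (hoff : ∀ i j, i ≠ j → |v i ⬝ᵥ A *ᵥ v j| ≤ ε)
    (hε : ε ≤ 1 / (3 * ((n : ℝ) - 1)))
    (S : Matrix (Fin n) (Fin n) ℝ) (hS : S = (Matrix.of v)ᵀ)
    (W : Matrix (Fin n) (Fin n) ℝ)
    (hWdef : W = (n : ℝ)⁻¹ • (posSemidefSqrtOld hA.posSemidef * (S * Sᵀ) * posSemidefSqrtOld hA.posSemidef))
    (hW : W.IsHermitian) :
    1 / (3 * (n : ℝ)) < ⨅ i, hW.eigenvalues i := by
  have hnR : (2 : ℝ) ≤ (n : ℝ) := by exact_mod_cast hn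
  have hn0 : (0 : ℝ) < (n : ℝ) := by linarith
  set Q := posSemidefSqrtOld hA.posSemidef with hQdef
  have hQQ : Q * Q = A := by
    have hsp := hA.posSemidef.1.spectral_theorem
    rw [Unitary.conjStarAlgAut_apply] at hsp
    conv_rhs => rw [hsp]
    rw [hQdef, posSemidefSqrtOld]
    have hU : (star (hA.posSemidef.1.eigenvectorUnitary : Matrix (Fin n) (Fin n) ℝ)) *
        (hA.posSemidef.1.eigenvectorUnitary : Matrix (Fin n) (Fin n) ℝ) = 1 :=
      Unitary.coe_star_mul_self _
    simp only [Matrix.mul_assoc]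
    rw [← Matrix.mul_assoc (star _) _ (_ * _), hU, Matrix.one_mul, ← Matrix.mul_assoc (diagonal _),
      diagonal_mul_diagonal]
    congr 3
    funext i
    simp [Real.mul_self_sqrt (hA.posSemidef.eigenvalues_nonneg i)]
  have hQH : Qᵀ = Q := by
    have h : Q.IsHermitian := by
      rw [hQdef, posSemidefSqrtOld, star_eq_conjTranspose]
      exact isHermitian_mul_mul_conjTranspose _ (isHermitian_diagonal _)
    rwa [Matrix.IsHermitian, conjTranspose_eq_transpose_of_trivial] at h
  set B := Q * S with hBdef
  have hBT : Bᵀ = Sᵀ * Q := by rw [hBdef, transpose_mul, hQH]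
  set G := Bᵀ * B with hGdef
  have hGSAS : G = Sᵀ * A * S := by
    rw [hGdef, hBT, hBdef, ← hQQ]
    simp only [Matrix.mul_assoc]
  have hGent : ∀ i j, G i j = v i ⬝ᵥ A *ᵥ v j := by
    intro i j
    rw [hGSAS, hS]
    simp only [mul_apply, mulVec, dotProduct, transpose_apply, of_apply,
      Finset.sum_mul, Finset.mul_sum]
    rw [Finset.sum_comm]
    exact Finset.sum_congr rfl fun k _ => Finset.sum_congr rfl fun l _ => by ring
  -- ε ≥ 0
  have hi01 : (⟨0, by omega⟩ : Fin n) ≠ (⟨1, by omega⟩ : Fin n) := by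
    simp [Fin.ext_iff]
  have hε0 : 0 ≤ ε := le_trans (abs_nonneg _) (hoff _ _ hi01)
  have hεn : ε * ((n : ℝ) - 1) ≤ 1/3 := by
    have hn1 : (1 : ℝ) ≤ (n : ℝ) - 1 := by linarith
    have h1 : ε * ((n:ℝ) - 1) ≤ (1 / (3 * ((n:ℝ) - 1))) * ((n:ℝ) - 1) := by
      apply mul_le_mul_of_nonneg_right hε; linarith
    have h2 : (1 / (3 * ((n:ℝ) - 1))) * ((n:ℝ) - 1) = 1/3 := by
      field_simp
    linarith
  have hGq : ∀ z : Fin n → ℝ, (2/3) * (z ⬝ᵥ z) ≤ z ⬝ᵥ (G *ᵥ z) :=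
    quad_bound G ε (fun i => by rw [hGent]; exact hdiag i)
      (fun i j hij => by rw [hGent]; exact hoff i j hij) hε0 hεn
  -- G is positive definite
  have hdps : ∀ z : Fin n → ℝ, z ≠ 0 → 0 < z ⬝ᵥ z := by
    intro z hz
    rcases lt_or_eq_of_le (Finset.sum_nonneg fun i (_ : i ∈ univ) =>
      mul_self_nonneg (z i)) with h | h
    · exact h
    · exact absurd (dotProduct_self_eq_zero.1 h.symm) hz
  have hGherm : G.IsHermitian := by
    rw [Matrix.IsHermitian, conjTranspose_eq_transpose_of_trivial, hGdef,
      transpose_mul, transpose_transpose]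
  have hGpd : G.PosDef := by
    refine PosDef.of_dotProduct_mulVec_pos hGherm fun x hx => ?_
    have h1 := hGq x
    have h2 := hdps x hx
    simp only [star_trivial]
    nlinarith
  -- Bᵀ has injective mulVec
  have hBdet : IsUnit B.det := by
    have h := hGpd.isUnit
    rw [Matrix.isUnit_iff_isUnit_det, hGdef, det_mul, det_transpose] at h
    exact isUnit_of_mul_isUnit_left h
  have hBT_inj : Function.Injective (Bᵀ.mulVec) := by
    rw [mulVec_injective_iff_isUnit, Matrix.isUnit_iff_isUnit_det, det_transpose]
    exact hBdet
  -- key eigenvalue bound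
  have key : ∀ i, 2 / (3 * (n : ℝ)) ≤ hW.eigenvalues i := by
    intro i
    set μ := hW.eigenvalues i with hμ
    set u : Fin n → ℝ := ⇑(hW.eigenvectorBasis i) with hu
    have hWu : W *ᵥ u = μ • u := hW.mulVec_eigenvectorBasis i
    have hu0 : u ≠ 0 := by
      intro hc
      apply hW.eigenvectorBasis.orthonormal.ne_zero i
      ext j
      exact congrFun hc j
    have hmm : Q * (S * Sᵀ) * Q = B * Bᵀ := by
      rw [hBT, hBdef]
      simp only [Matrix.mul_assoc]
    have hWBB : W = (n : ℝ)⁻¹ • (B * Bᵀ) := by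
      rw [hWdef, hmm]
    have hBBu : (B * Bᵀ) *ᵥ u = ((n : ℝ) * μ) • u := by
      have h1 : W *ᵥ u = (n : ℝ)⁻¹ • ((B * Bᵀ) *ᵥ u) := by
        rw [hWBB, smul_mulVec]
      rw [h1] at hWu
      have hn0' : (n : ℝ) ≠ 0 := ne_of_gt hn0
      calc (B * Bᵀ) *ᵥ u = (n : ℝ) • ((n : ℝ)⁻¹ • ((B * Bᵀ) *ᵥ u)) := by
            rw [smul_smul, mul_inv_cancel₀ hn0', one_smul]
        _ = (n : ℝ) • (μ • u) := by rw [hWu]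
        _ = ((n : ℝ) * μ) • u := smul_smul _ _ _
    set w := Bᵀ *ᵥ u with hw
    have hw0 : w ≠ 0 := by
      intro hc
      apply hu0
      apply hBT_inj
      rw [← hw, hc, mulVec_zero]
    have hGw : G *ᵥ w = ((n : ℝ) * μ) • w := by
      calc G *ᵥ w = (Bᵀ * B * Bᵀ) *ᵥ u := by rw [hGdef, hw, mulVec_mulVec]
        _ = Bᵀ *ᵥ ((B * Bᵀ) *ᵥ u) := by
              rw [mulVec_mulVec, hBdef]
              simp only [Matrix.mul_assoc]
        _ = ((n : ℝ) * μ) • w := by rw [hBBu, mulVec_smul, hw]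
    have h1 := hGq w
    rw [hGw] at h1
    have h2 : w ⬝ᵥ (((n : ℝ) * μ) • w) = ((n : ℝ) * μ) * (w ⬝ᵥ w) := by
      rw [dotProduct_smul, smul_eq_mul]
    rw [h2] at h1
    have hww := hdps w hw0
    have h3 : 2/3 ≤ (n : ℝ) * μ := le_of_mul_le_mul_right (by linarith) hww
    rw [div_le_iff₀ (by linarith : (0:ℝ) < 3 * (n:ℝ))]
    nlinarith
  haveI : Nonempty (Fin n) := ⟨⟨0, by omega⟩⟩
  have hinf : 2 / (3 * (n : ℝ)) ≤ ⨅ i, hW.eigenvalues i := le_ciInf key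
  have hlt : 1 / (3 * (n : ℝ)) < 2 / (3 * (n : ℝ)) := by
    have h3n : (0:ℝ) < 3 * (n : ℝ) := by linarith
    rw [div_lt_div_iff₀ h3n h3n]
    nlinarith
  linarith
end

section
/- Let n ≥ 2, let v_1, …, v_n ∈ ℝⁿ satisfy v_iᵀ A v_i = 1 for all i and |v_iᵀ A v_j| ≤ ε for all i ≠ j, and suppose ε < 1/(n−1). Let S := [v_1, …, v_n], let x* := A⁻¹ b for b ∈ ℝⁿ, and let x̂ := S Sᵀ b. Then ‖x̂ − x*‖_A ≤ ε(n−1)·(1 + ε(n−1))/(1 − ε(n−1)) · ‖x*‖_A. -/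
open Matrix BigOperators Finset



lemma quad_offdiag_bound {n : ℕ} (G : Matrix (Fin n) (Fin n) ℝ) (ε : ℝ) (hε0 : 0 ≤ ε)
    (hd : ∀ i, G i i = 1) (ho : ∀ i j, i ≠ j → |G i j| ≤ ε) (z : Fin n → ℝ) :
    |z ⬝ᵥ G *ᵥ z - z ⬝ᵥ z| ≤ ε * ((n : ℝ) - 1) * (z ⬝ᵥ z) := by
  have e : z ⬝ᵥ G *ᵥ z - z ⬝ᵥ z
      = ∑ i, ∑ j, (if j = i then 0 else z i * G i j * z j) := by
    have expand : z ⬝ᵥ G *ᵥ z = ∑ i, ∑ j, z i * G i j * z j := by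
      simp only [dotProduct, mulVec, dotProduct, Finset.mul_sum]
      exact Finset.sum_congr rfl fun i _ => Finset.sum_congr rfl fun j _ => by ring
    have split : ∀ i j : Fin n, z i * G i j * z j
        = (if j = i then z i * z i else 0) + (if j = i then 0 else z i * G i j * z j) := by
      intro i j
      split_ifs with hij
      · subst hij; rw [hd]; ring
      · ring
    rw [expand]
    have : ∑ i, ∑ j, z i * G i j * z j
        = ∑ i : Fin n, ((∑ j, if j = i then z i * z i else (0:ℝ))
            + ∑ j, if j = i then 0 else z i * G i j * z j) := by
      refine Finset.sum_congr rfl fun i _ => ?_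
      rw [← Finset.sum_add_distrib]
      exact Finset.sum_congr rfl fun j _ => split i j
    rw [this, Finset.sum_add_distrib]
    simp [dotProduct]
  rw [e]
  have habs : |∑ i, ∑ j, (if j = i then 0 else z i * G i j * z j)|
      ≤ ∑ i, ∑ j, (if j = i then 0 else ε * (|z i| * |z j|)) := by
    refine (Finset.abs_sum_le_sum_abs _ _).trans (Finset.sum_le_sum fun i _ => ?_)
    refine (Finset.abs_sum_le_sum_abs _ _).trans (Finset.sum_le_sum fun j _ => ?_)
    split_ifs with hij
    · simp
    · have habs2 : |z i * G i j * z j| = |G i j| * (|z i| * |z j|) := by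
        rw [abs_mul, abs_mul]; ring
      rw [habs2]
      exact mul_le_mul_of_nonneg_right (ho i j fun h => hij h.symm) (by positivity)
  refine habs.trans ?_
  set s := ∑ i, |z i| with hs
  set q := ∑ i, |z i| * |z i| with hq
  have hqz : q = z ⬝ᵥ z := by
    simp only [hq, dotProduct, abs_mul_abs_self]
  have hq0 : 0 ≤ q := Finset.sum_nonneg fun i _ => mul_self_nonneg _
  have e2 : ∑ i, ∑ j, (if j = i then 0 else ε * (|z i| * |z j|)) = ε * (s * s - q) := by
    have split2 : ∀ i j : Fin n, (if j = i then (0:ℝ) else ε * (|z i| * |z j|))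
        = ε * (|z i| * |z j|) - (if j = i then ε * (|z i| * |z j|) else 0) := by
      intro i j; split_ifs <;> ring
    simp_rw [split2, Finset.sum_sub_distrib, Finset.sum_ite_eq', Finset.mem_univ, if_true,
      ← Finset.mul_sum, ← Finset.sum_mul]
    rw [← hs, ← hq]
    ring
  have hsq : s * s ≤ (n : ℝ) * q := by
    have h := sq_sum_le_card_mul_sum_sq (s := (Finset.univ : Finset (Fin n)))
      (f := fun i => |z i|)
    have h2 : (∑ i, |z i|) ^ 2 ≤ (n : ℝ) * ∑ i, |z i| ^ 2 := by
      simpa [Finset.card_univ] using h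
    calc s * s = (∑ i, |z i|) ^ 2 := by rw [hs]; ring
      _ ≤ (n : ℝ) * ∑ i, |z i| ^ 2 := h2
      _ = (n : ℝ) * q := by rw [hq]; congr 1; exact Finset.sum_congr rfl fun i _ => sq (|z i|) ▸ by ring
  rw [e2, ← hqz]
  nlinarith [hsq, hq0, hε0, mul_le_mul_of_nonneg_left hsq hε0]


lemma dot_self_nonneg {n : ℕ} (z : Fin n → ℝ) : 0 ≤ z ⬝ᵥ z :=
  Finset.sum_nonneg fun i _ => mul_self_nonneg _

lemma symm_quad_bound {n : ℕ} (M : Matrix (Fin n) (Fin n) ℝ) (hM : Mᵀ = M) (δ : ℝ)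
    (h : ∀ u : Fin n → ℝ, |u ⬝ᵥ M *ᵥ u| ≤ δ * (u ⬝ᵥ u)) (z : Fin n → ℝ) :
    (M *ᵥ z) ⬝ᵥ (M *ᵥ z) ≤ δ ^ 2 * (z ⬝ᵥ z) := by
  set w := M *ᵥ z with hw
  set a := z ⬝ᵥ z with ha
  set b := w ⬝ᵥ w with hb
  have ha0 : 0 ≤ a := dot_self_nonneg z
  have hb0 : 0 ≤ b := dot_self_nonneg w
  have hzMw : z ⬝ᵥ M *ᵥ w = b := by
    rw [dotProduct_mulVec, ← mulVec_transpose, hM, ← hw, hb]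
  have hwMz : w ⬝ᵥ M *ᵥ z = b := by rw [← hw, hb]
  have key : ∀ t : ℝ, 4 * t * b ≤ δ * (2 * t ^ 2 * a + 2 * b) := by
    intro t
    have h1 := h (t • z + w)
    have h2 := h (t • z - w)
    have e1 : (t • z + w) ⬝ᵥ M *ᵥ (t • z + w)
        = t ^ 2 * (z ⬝ᵥ M *ᵥ z) + 2 * t * b + w ⬝ᵥ M *ᵥ w := by
      simp only [mulVec_add, mulVec_smul, add_dotProduct, smul_dotProduct,
        dotProduct_add, dotProduct_smul, smul_eq_mul]
      rw [hzMw, hwMz]; ring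
    have e2 : (t • z - w) ⬝ᵥ M *ᵥ (t • z - w)
        = t ^ 2 * (z ⬝ᵥ M *ᵥ z) - 2 * t * b + w ⬝ᵥ M *ᵥ w := by
      simp only [mulVec_sub, mulVec_smul, sub_dotProduct, smul_dotProduct,
        dotProduct_sub, dotProduct_smul, smul_eq_mul]
      rw [hzMw, hwMz]; ring
    have n1 : (t • z + w) ⬝ᵥ (t • z + w) = t ^ 2 * a + 2 * t * (z ⬝ᵥ w) + b := by
      simp only [add_dotProduct, smul_dotProduct, dotProduct_add, dotProduct_smul,
        smul_eq_mul, dotProduct_comm w z]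
      ring
    have n2 : (t • z - w) ⬝ᵥ (t • z - w) = t ^ 2 * a - 2 * t * (z ⬝ᵥ w) + b := by
      simp only [sub_dotProduct, smul_dotProduct, dotProduct_sub, dotProduct_smul,
        smul_eq_mul, dotProduct_comm w z]
      ring
    rw [e1, n1] at h1
    rw [e2, n2] at h2
    have h1' := (abs_le.mp h1).2
    have h2' := (abs_le.mp h2).1
    nlinarith [h1', h2']
  rcases eq_or_lt_of_le hb0 with hb' | hb'
  · rw [← hb']; positivity
  · have ha' : 0 < a := by
      rcases eq_or_lt_of_le ha0 with ha' | ha'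
      · exfalso
        have hz : z = 0 := dotProduct_self_eq_zero.mp ha'.symm
        have hbz : b = 0 := by simp [hb, hw, hz]
        linarith
      · exact ha'
    set t := Real.sqrt (b / a) with ht
    have ht0 : 0 < t := Real.sqrt_pos.mpr (by positivity)
    have ht2 : t ^ 2 = b / a := Real.sq_sqrt (by positivity)
    have := key t
    have htb : t ^ 2 * a = b := by rw [ht2]; field_simp
    have htδ : t ≤ δ := by nlinarith
    have : t ^ 2 ≤ δ ^ 2 := by nlinarith
    rw [ht2, div_le_iff₀ ha'] at this
    linarith [this]


theorem stmt19 {n : ℕ} (hn : 2 ≤ n) (A : Matrix (Fin n) (Fin n) ℝ) (hA : A.PosDef)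
    (v : Fin n → Fin n → ℝ) (ε : ℝ)
    (hdiag : ∀ i, v i ⬝ᵥ A *ᵥ v i = 1)
    (hoff : ∀ i j, i ≠ j → |v i ⬝ᵥ A *ᵥ v j| ≤ ε)
    (hε : ε < 1 / ((n : ℝ) - 1))
    (S : Matrix (Fin n) (Fin n) ℝ) (hS : S = (Matrix.of v)ᵀ)
    (b : Fin n → ℝ) (xstar xhat : Fin n → ℝ)
    (hxstar : xstar = A⁻¹ *ᵥ b) (hxhat : xhat = (S * Sᵀ) *ᵥ b) :
    Real.sqrt ((xhat - xstar) ⬝ᵥ A *ᵥ (xhat - xstar)) ≤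
      ε * ((n : ℝ) - 1) * (1 + ε * ((n : ℝ) - 1)) / (1 - ε * ((n : ℝ) - 1)) *
        Real.sqrt (xstar ⬝ᵥ A *ᵥ xstar) := by
  have hn1 : (0:ℝ) < (n:ℝ) - 1 := by
    have h2 : (2:ℝ) ≤ (n:ℝ) := by exact_mod_cast hn
    linarith
  set δ := ε * ((n:ℝ) - 1) with hδ
  have hε0 : 0 ≤ ε := by
    have h01 : (⟨0, by omega⟩ : Fin n) ≠ ⟨1, by omega⟩ := by simp [Fin.ext_iff]
    exact le_trans (abs_nonneg _) (hoff _ _ h01)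
  have hδ0 : 0 ≤ δ := mul_nonneg hε0 hn1.le
  have hδ1 : δ < 1 := by
    have h := mul_lt_mul_of_pos_right hε hn1
    rwa [one_div, inv_mul_cancel₀ hn1.ne'] at h
  have h1δ : (0:ℝ) < 1 - δ := by linarith
  -- A facts
  have hAdet : IsUnit A.det := hA.det_pos.ne'.isUnit
  have hb : A *ᵥ xstar = b := by
    rw [hxstar, mulVec_mulVec, Matrix.mul_nonsing_inv A hAdet, one_mulVec]
  have hAsym : Aᵀ = A := by
    have h : Aᴴ = A := hA.isHermitian
    rwa [Matrix.conjTranspose_eq_transpose_of_trivial] at h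
  -- square root of A
  open scoped MatrixOrder in
  set W := CFC.sqrt A with hWdef
  open scoped MatrixOrder in
  have hW2 : W * W = A := CFC.sqrt_mul_sqrt_self A hA.posSemidef.nonneg
  have hWt : Wᵀ = W := by
    open scoped MatrixOrder in
    have h : Wᴴ = W := (Matrix.nonneg_iff_posSemidef.mp (CFC.sqrt_nonneg A)).isHermitian
    rwa [Matrix.conjTranspose_eq_transpose_of_trivial] at h
  have quadW : ∀ u : Fin n → ℝ, u ⬝ᵥ A *ᵥ u = (W *ᵥ u) ⬝ᵥ (W *ᵥ u) := by
    intro u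
    rw [← hW2, ← mulVec_mulVec, dotProduct_mulVec, ← Matrix.mulVec_transpose, hWt]
  -- U and G
  set U := W * S with hUdef
  set G := Sᵀ * A * S with hGdef
  have hGU_mat : Uᵀ * U = G := by
    rw [hUdef, Matrix.transpose_mul, hWt, hGdef, ← hW2]
    simp only [Matrix.mul_assoc]
  have quadG : ∀ u : Fin n → ℝ, u ⬝ᵥ G *ᵥ u = (U *ᵥ u) ⬝ᵥ (U *ᵥ u) := by
    intro u
    rw [← hGU_mat, ← mulVec_mulVec, dotProduct_mulVec, ← Matrix.mulVec_transpose,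
      Matrix.transpose_transpose]
  have hGe : ∀ i j, G i j = v i ⬝ᵥ A *ᵥ v j := by
    intro i j
    rw [hGdef, hS]
    simp only [Matrix.mul_apply, Matrix.transpose_apply, Matrix.of_apply, dotProduct,
      mulVec, dotProduct, Finset.sum_mul, Finset.mul_sum]
    rw [Finset.sum_comm]
    exact Finset.sum_congr rfl fun l _ => Finset.sum_congr rfl fun k _ => by ring
  have hquad : ∀ u : Fin n → ℝ, |u ⬝ᵥ G *ᵥ u - u ⬝ᵥ u| ≤ δ * (u ⬝ᵥ u) := by
    intro u
    have h := quad_offdiag_bound G ε hε0 (fun i => by rw [hGe]; exact hdiag i)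
      (fun i j hij => by rw [hGe]; exact hoff i j hij) u
    calc |u ⬝ᵥ G *ᵥ u - u ⬝ᵥ u| ≤ ε * ((n:ℝ) - 1) * (u ⬝ᵥ u) := h
      _ = δ * (u ⬝ᵥ u) := by rw [hδ]
  -- M = G - 1
  set M := G - 1 with hMdef
  have hGsym : Gᵀ = G := by
    rw [hGdef, Matrix.transpose_mul, Matrix.transpose_mul, Matrix.transpose_transpose, hAsym]
    simp only [Matrix.mul_assoc]
  have hMt : Mᵀ = M := by
    rw [hMdef, Matrix.transpose_sub, Matrix.transpose_one, hGsym]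
  have hMquad : ∀ u : Fin n → ℝ, |u ⬝ᵥ M *ᵥ u| ≤ δ * (u ⬝ᵥ u) := by
    intro u
    have h : u ⬝ᵥ M *ᵥ u = u ⬝ᵥ G *ᵥ u - u ⬝ᵥ u := by
      rw [hMdef, Matrix.sub_mulVec, dotProduct_sub, Matrix.one_mulVec]
    rw [h]; exact hquad u
  have hMbound := symm_quad_bound M hMt δ hMquad
  -- U is surjective
  have hUinj : Function.Injective U.mulVecLin := by
    intro p q hpq
    have h0 : U *ᵥ (p - q) = 0 := by
      rw [Matrix.mulVec_sub]
      simpa [Matrix.mulVecLin_apply, sub_eq_zero] using hpq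
    have hz0 : (p - q) ⬝ᵥ (p - q) = 0 := by
      have h1 := hquad (p - q)
      rw [quadG (p - q), h0] at h1
      simp only [zero_dotProduct, zero_sub, abs_neg] at h1
      have h3 : 0 ≤ (p - q) ⬝ᵥ (p - q) := dot_self_nonneg _
      rw [abs_of_nonneg h3] at h1
      nlinarith
    have := dotProduct_self_eq_zero.mp hz0
    exact sub_eq_zero.mp this
  obtain ⟨z, hz⟩ := LinearMap.injective_iff_surjective.mp hUinj (W *ᵥ xstar)
  have hz' : U *ᵥ z = W *ᵥ xstar := hz
  set a := z ⬝ᵥ z with hadef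
  have ha0 : 0 ≤ a := dot_self_nonneg z
  -- lower bound on ‖xstar‖_A²
  have hX : xstar ⬝ᵥ A *ᵥ xstar = (W *ᵥ xstar) ⬝ᵥ (W *ᵥ xstar) := quadW xstar
  have hya : (1 - δ) * a ≤ (W *ᵥ xstar) ⬝ᵥ (W *ᵥ xstar) := by
    have h1 := hquad z
    rw [quadG z, hz'] at h1
    have h2 := (abs_le.mp h1).1
    linarith
  -- residual identity
  have hmat : W * (S * Sᵀ) * A = U * Uᵀ * W := by
    rw [hUdef, Matrix.transpose_mul, hWt, ← hW2]
    simp only [Matrix.mul_assoc]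
  have hWxhat : W *ᵥ xhat = U *ᵥ (G *ᵥ z) := by
    calc W *ᵥ xhat = (W * (S * Sᵀ) * A) *ᵥ xstar := by
          rw [hxhat, ← hb, mulVec_mulVec, mulVec_mulVec]
      _ = (U * Uᵀ * W) *ᵥ xstar := by rw [hmat]
      _ = U *ᵥ (Uᵀ *ᵥ (W *ᵥ xstar)) := by rw [← mulVec_mulVec, ← mulVec_mulVec]
      _ = U *ᵥ (Uᵀ *ᵥ (U *ᵥ z)) := by rw [hz']
      _ = U *ᵥ (G *ᵥ z) := by rw [mulVec_mulVec z Uᵀ U, hGU_mat]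
  have hr : W *ᵥ (xhat - xstar) = U *ᵥ (M *ᵥ z) := by
    rw [Matrix.mulVec_sub, hWxhat, ← hz', hMdef, Matrix.sub_mulVec, Matrix.one_mulVec,
      Matrix.mulVec_sub]
  -- main quantitative bound
  have hT : (xhat - xstar) ⬝ᵥ A *ᵥ (xhat - xstar) ≤ (1 + δ) * (δ ^ 2 * a) := by
    rw [quadW, hr]
    have h1 : (U *ᵥ (M *ᵥ z)) ⬝ᵥ (U *ᵥ (M *ᵥ z)) = (M *ᵥ z) ⬝ᵥ G *ᵥ (M *ᵥ z) :=
      (quadG (M *ᵥ z)).symm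
    have h2 := (abs_le.mp (hquad (M *ᵥ z))).2
    have h3 := hMbound z
    have h4 : 0 ≤ (M *ᵥ z) ⬝ᵥ (M *ᵥ z) := dot_self_nonneg _
    rw [h1]
    nlinarith
  have hX0 : 0 ≤ xstar ⬝ᵥ A *ᵥ xstar := by
    rw [hX]; exact dot_self_nonneg _
  have hC0 : 0 ≤ δ * (1 + δ) / (1 - δ) := by positivity
  have hmain : (xhat - xstar) ⬝ᵥ A *ᵥ (xhat - xstar)
      ≤ (δ * (1 + δ) / (1 - δ)) ^ 2 * (xstar ⬝ᵥ A *ᵥ xstar) := by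
    have hXa : (1 - δ) * a ≤ xstar ⬝ᵥ A *ᵥ xstar := by rw [hX]; exact hya
    rw [div_pow, div_mul_eq_mul_div, le_div_iff₀ (by positivity)]
    nlinarith [mul_le_mul_of_nonneg_right hT (sq_nonneg (1 - δ)),
      mul_le_mul_of_nonneg_left hXa (show (0:ℝ) ≤ δ^2 * (1+δ)^2 by positivity),
      mul_nonneg (mul_nonneg (mul_nonneg (mul_nonneg hδ0 (mul_nonneg hδ0 hδ0))
        (by linarith : (0:ℝ) ≤ 1 + δ)) h1δ.le) ha0]
  have hfin := Real.sqrt_le_sqrt hmain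
  rwa [Real.sqrt_mul (sq_nonneg _), Real.sqrt_sq hC0] at hfin
end
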